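/- arXiv:2110.06801 — 4 statements merged into one kernel-verified Lean document; each statement's English description precedes it below -/
import Mathlib

section
/- For every natural number n ≥ 2 one has π(n−1)·coth(π(n−1)/2) < πn·tanh(πn/2), where tanh and coth denote the hyperbolic tangent and hyperbolic cotangent. -/
open Real

lemma coth_upper (x : ℝ) (hx : 1 ≤ x) :
    Real.cosh x / Real.sinh x < 1 + 4 * Real.exp (-2 * x) := by
  have hx0 : 0 < x := lt_of_lt_of_le one_pos hx
  have hs : 0 < Real.sinh x := Real.sinh_pos_iff.2 hx0
  have hu : 0 < Real.exp (-x) := Real.exp_pos _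
  have huE : Real.exp (-x) * Real.exp x = 1 := by
    rw [← Real.exp_add]; simp
  have hu2 : Real.exp (-x) ^ 2 < 1 / 2 := by
    have h2 : Real.exp (-x) ≤ Real.exp (-1) := Real.exp_le_exp.2 (by linarith)
    have h3 : Real.exp (-1) < 1 / 2 := by
      have := Real.exp_one_gt_d9
      have hinv : Real.exp (-1) = (Real.exp 1)⁻¹ := by
        rw [← Real.exp_neg]
      rw [hinv]
      rw [inv_lt_comm₀ (Real.exp_pos 1) (by norm_num)]
      linarith
    nlinarith [Real.exp_pos (-1)]
  have hexp2 : Real.exp (-2 * x) = Real.exp (-x) ^ 2 := by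
    rw [← Real.exp_nat_mul]; ring_nf
  rw [div_lt_iff₀ hs, Real.cosh_eq, Real.sinh_eq, hexp2]
  nlinarith [mul_pos hu hu, mul_pos (mul_pos hu hu) hu, Real.exp_pos x]

lemma tanh_lower (y : ℝ) (hy : 0 < y) :
    1 - 2 * Real.exp (-2 * y) < Real.tanh y := by
  have hc : 0 < Real.cosh y := Real.cosh_pos y
  have hu : 0 < Real.exp (-y) := Real.exp_pos _
  have huE : Real.exp (-y) * Real.exp y = 1 := by
    rw [← Real.exp_add]; simp
  have hexp2 : Real.exp (-2 * y) = Real.exp (-y) ^ 2 := by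
    rw [← Real.exp_nat_mul]; ring_nf
  rw [Real.tanh_eq_sinh_div_cosh, lt_div_iff₀ hc, Real.cosh_eq, Real.sinh_eq, hexp2]
  nlinarith [mul_pos (mul_pos hu hu) hu, Real.exp_pos y]

/-- For every natural number `n ≥ 2`,
`π (n−1) · coth (π (n−1) / 2) < π n · tanh (π n / 2)`,
where `coth x = cosh x / sinh x`. -/
theorem coth_tanh_eigenvalue_ordering (n : ℕ) (hn : 2 ≤ n) :
    π * ((n : ℝ) - 1) * (Real.cosh (π * ((n : ℝ) - 1) / 2) / Real.sinh (π * ((n : ℝ) - 1) / 2))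
      < π * n * Real.tanh (π * n / 2) := by
  have hpi : (3 : ℝ) < π := by
    have := Real.pi_gt_d6; linarith
  set m : ℝ := (n : ℝ) - 1 with hm
  have hm1 : 1 ≤ m := by
    have : (2 : ℝ) ≤ (n : ℝ) := by exact_mod_cast hn
    simp [hm]; linarith
  have hnm : (n : ℝ) = m + 1 := by simp [hm]
  have hx1 : 1 ≤ π * m / 2 := by nlinarith
  have hy0 : 0 < π * (n : ℝ) / 2 := by nlinarith
  -- the two exp bounds
  have hA := coth_upper (π * m / 2) hx1
  have hB := tanh_lower (π * (n : ℝ) / 2) hy0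
  rw [show -2 * (π * m / 2) = -(π * m) by ring] at hA
  rw [show -2 * (π * (n : ℝ) / 2) = -(π * (n : ℝ)) by ring] at hB
  -- key estimates
  have h1 : m * Real.exp (-(π * m)) ≤ Real.exp (-π) := by
    have h : m ≤ Real.exp (π * (m - 1)) := by
      have := Real.add_one_le_exp (π * (m - 1))
      nlinarith
    calc m * Real.exp (-(π * m)) ≤ Real.exp (π * (m - 1)) * Real.exp (-(π * m)) := by
          apply mul_le_mul_of_nonneg_right h (Real.exp_pos _).le
      _ = Real.exp (-π) := by rw [← Real.exp_add]; ring_nf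
  have h2 : (m + 1) * Real.exp (-(π * (m + 1))) ≤ Real.exp (-π) := by
    have h : m + 1 ≤ Real.exp (π * m) := by
      have := Real.add_one_le_exp (π * m)
      nlinarith
    calc (m + 1) * Real.exp (-(π * (m + 1)))
        ≤ Real.exp (π * m) * Real.exp (-(π * (m + 1))) := by
          apply mul_le_mul_of_nonneg_right h (Real.exp_pos _).le
      _ = Real.exp (-π) := by rw [← Real.exp_add]; ring_nf
  have hE : Real.exp (-π) < 1 / 6 := by
    have h3 : (6 : ℝ) < Real.exp π := by
      have hge : Real.exp 3 ≤ Real.exp π := Real.exp_le_exp.2 hpi.le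
      have hcube : Real.exp 1 ^ (3 : ℕ) = Real.exp 3 := by
        rw [← Real.exp_nat_mul]; norm_num
      have hlt : (2.7182818283 : ℝ) ^ (3 : ℕ) < Real.exp 1 ^ (3 : ℕ) :=
        pow_lt_pow_left₀ Real.exp_one_gt_d9 (by norm_num) (by norm_num)
      nlinarith
    rw [Real.exp_neg]
    rw [inv_lt_comm₀ (Real.exp_pos π) (by norm_num)]
    linarith
  -- chain
  have hmp : 0 < π * m := by nlinarith
  have hnp : 0 < π * (n : ℝ) := by nlinarith
  have step1 : π * m * (Real.cosh (π * m / 2) / Real.sinh (π * m / 2))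
      < π * m * (1 + 4 * Real.exp (-(π * m))) :=
    mul_lt_mul_of_pos_left hA hmp
  have step3 : π * (n : ℝ) * (1 - 2 * Real.exp (-(π * (n : ℝ))))
      < π * (n : ℝ) * Real.tanh (π * (n : ℝ) / 2) :=
    mul_lt_mul_of_pos_left hB hnp
  have step2 : π * m * (1 + 4 * Real.exp (-(π * m)))
      ≤ π * (n : ℝ) * (1 - 2 * Real.exp (-(π * (n : ℝ)))) := by
    rw [hnm]
    nlinarith [h1, h2, hE, hpi]
  calc π * m * (Real.cosh (π * m / 2) / Real.sinh (π * m / 2))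
      < π * m * (1 + 4 * Real.exp (-(π * m))) := step1
    _ ≤ π * (n : ℝ) * (1 - 2 * Real.exp (-(π * (n : ℝ)))) := step2
    _ < π * (n : ℝ) * Real.tanh (π * (n : ℝ) / 2) := step3
end

section
/- Let v be a real-valued function that is twice continuously differentiable on an open neighborhood of the closed unit square Q = [0,1]×[0,1], and let μ ∈ ℝ. Assume: (i) ∂²v/∂x² + ∂²v/∂y² + μv = 0 on Q; (ii) ∂v/∂x(0,y) = ∂v/∂x(1,y) = 0 for all y ∈ [0,1]; (iii) v(x,0) = v(x,1) = 0 for all x ∈ [0,1]; (iv) ∫_Q v² dxdy = 1. Then μ·( (1/2)∫₀¹ v(0,y)² dy + (1/2)∫₀¹ v(1,y)² dy − 2 ) = (1/2)∫₀¹ (∂v/∂y(0,y))² dy + (1/2)∫₀¹ (∂v/∂y(1,y))² dy − (1/2)∫₀¹ (∂v/∂y(x,0))² dx − (1/2)∫₀¹ (∂v/∂y(x,1))² dx. -/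
open MeasureTheory intervalIntegral

/-- Rellich–Christianson identity for the mixed Neumann–Dirichlet problem on
the unit square, with Neumann faces `{0} × [0,1]`, `{1} × [0,1]` and Dirichlet faces
`[0,1] × {0}`, `[0,1] × {1}`, evaluated at the center `p = (1/2, 1/2)`. -/
theorem rellich_christianson_square_ND
    (v : ℝ → ℝ → ℝ) (μ : ℝ) (U : Set (ℝ × ℝ)) (hU : IsOpen U)
    (hQU : Set.Icc ((0 : ℝ), (0 : ℝ)) (1, 1) ⊆ U)
    (hv : ContDiffOn ℝ 2 (fun p : ℝ × ℝ => v p.1 p.2) U)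
    (heq : ∀ x ∈ Set.Icc (0 : ℝ) 1, ∀ y ∈ Set.Icc (0 : ℝ) 1,
      deriv (deriv (fun s : ℝ => v s y)) x + deriv (deriv (fun t : ℝ => v x t)) y
        + μ * v x y = 0)
    (hneu0 : ∀ y ∈ Set.Icc (0 : ℝ) 1, deriv (fun s : ℝ => v s y) 0 = 0)
    (hneu1 : ∀ y ∈ Set.Icc (0 : ℝ) 1, deriv (fun s : ℝ => v s y) 1 = 0)
    (hdir0 : ∀ x ∈ Set.Icc (0 : ℝ) 1, v x 0 = 0)
    (hdir1 : ∀ x ∈ Set.Icc (0 : ℝ) 1, v x 1 = 0)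
    (hnorm : (∫ x in (0 : ℝ)..1, ∫ y in (0 : ℝ)..1, (v x y) ^ 2) = 1) :
    μ * ((1 / 2) * (∫ y in (0 : ℝ)..1, (v 0 y) ^ 2)
          + (1 / 2) * (∫ y in (0 : ℝ)..1, (v 1 y) ^ 2) - 2)
      = (1 / 2) * (∫ y in (0 : ℝ)..1, (deriv (fun t : ℝ => v 0 t) y) ^ 2)
        + (1 / 2) * (∫ y in (0 : ℝ)..1, (deriv (fun t : ℝ => v 1 t) y) ^ 2)
        - (1 / 2) * (∫ x in (0 : ℝ)..1, (deriv (fun t : ℝ => v x t) 0) ^ 2)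
        - (1 / 2) * (∫ x in (0 : ℝ)..1, (deriv (fun t : ℝ => v x t) 1) ^ 2) := by
  set Q : Set (ℝ × ℝ) := Set.Icc ((0 : ℝ), (0 : ℝ)) (1, 1) with hQdef
  have hmemQ : ∀ x y : ℝ, x ∈ Set.Icc (0:ℝ) 1 → y ∈ Set.Icc (0:ℝ) 1 → (x, y) ∈ Q := by
    intro x y hx hy
    exact ⟨⟨hx.1, hy.1⟩, ⟨hx.2, hy.2⟩⟩
  set V : ℝ × ℝ → ℝ := fun p : ℝ × ℝ => v p.1 p.2 with hVdef
  set W : ℝ × ℝ → (ℝ × ℝ →L[ℝ] ℝ) := fderiv ℝ V with hWdef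
  have hW1 : ContDiffOn ℝ 1 W U := hv.fderiv_of_isOpen hU (by norm_num)
  have hVd : ∀ p ∈ U, HasFDerivAt V (W p) p := fun p hp =>
    ((hv.differentiableOn (by norm_num)).differentiableAt (hU.mem_nhds hp)).hasFDerivAt
  have hWd : ∀ p ∈ U, HasFDerivAt W (fderiv ℝ W p) p := fun p hp =>
    ((hW1.differentiableOn (by norm_num)).differentiableAt (hU.mem_nhds hp)).hasFDerivAt
  set H : (ℝ × ℝ) → (ℝ × ℝ) →L[ℝ] (ℝ × ℝ) →L[ℝ] ℝ := fun p => fderiv ℝ W p with hHdef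
  have hsym : ∀ p ∈ U, ∀ u w : ℝ × ℝ, H p u w = H p w u := by
    intro p hp u w
    exact second_derivative_symmetric_of_eventually
      (Filter.eventually_of_mem (hU.mem_nhds hp) (fun q hq => hVd q hq)) (hWd p hp) u w
  set e1 : (ℝ × ℝ →L[ℝ] ℝ) →L[ℝ] ℝ := ContinuousLinearMap.apply ℝ ℝ ((1:ℝ), (0:ℝ)) with he1
  set e2 : (ℝ × ℝ →L[ℝ] ℝ) →L[ℝ] ℝ := ContinuousLinearMap.apply ℝ ℝ ((0:ℝ), (1:ℝ)) with he2
  set vx : ℝ × ℝ → ℝ := fun p => W p (1, 0) with hvxdef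
  set vy : ℝ × ℝ → ℝ := fun p => W p (0, 1) with hvydef
  have hWapp1 : ∀ p, W p (1, 0) = vx p := fun _ => rfl
  have hWapp2 : ∀ p, W p (0, 1) = vy p := fun _ => rfl
  have hvxd : ∀ p ∈ U, HasFDerivAt vx (e1.comp (H p)) p := fun p hp =>
    (e1.hasFDerivAt.comp p (hWd p hp))
  have hvyd : ∀ p ∈ U, HasFDerivAt vy (e2.comp (H p)) p := fun p hp =>
    (e2.hasFDerivAt.comp p (hWd p hp))
  have hx_slice : ∀ (x y : ℝ), (x, y) ∈ U → HasDerivAt (fun s => v s y) (vx (x, y)) x := by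
    intro x y hp
    exact (hVd _ hp).comp_hasDerivAt x ((hasDerivAt_id x).prodMk (hasDerivAt_const x y))
  have hy_slice : ∀ (x y : ℝ), (x, y) ∈ U → HasDerivAt (fun t => v x t) (vy (x, y)) y := by
    intro x y hp
    exact (hVd _ hp).comp_hasDerivAt y ((hasDerivAt_const y x).prodMk (hasDerivAt_id y))
  -- second order slices
  have hxx : ∀ (x y : ℝ), (x, y) ∈ U →
      deriv (deriv (fun s : ℝ => v s y)) x = H (x, y) (1, 0) (1, 0) := by
    intro x y hp
    have hop : ∀ᶠ s in nhds x, (s, y) ∈ U := by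
      have hc : ContinuousAt (fun s : ℝ => (s, y)) x := by fun_prop
      exact hc.preimage_mem_nhds (hU.mem_nhds hp)
    have h1 : deriv (fun s => v s y) =ᶠ[nhds x] fun s => vx (s, y) :=
      hop.mono fun s hs => (hx_slice s y hs).deriv
    rw [h1.deriv_eq]
    have h2 : HasDerivAt (fun s => vx (s, y)) ((e1.comp (H (x, y))) (1, 0)) x := by
      exact (hvxd _ hp).comp_hasDerivAt x ((hasDerivAt_id x).prodMk (hasDerivAt_const x y))
    rw [h2.deriv]
    simp [e1]
  have hyy : ∀ (x y : ℝ), (x, y) ∈ U →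
      deriv (deriv (fun t : ℝ => v x t)) y = H (x, y) (0, 1) (0, 1) := by
    intro x y hp
    have hop : ∀ᶠ t in nhds y, (x, t) ∈ U := by
      have hc : ContinuousAt (fun t : ℝ => (x, t)) y := by fun_prop
      exact hc.preimage_mem_nhds (hU.mem_nhds hp)
    have h1 : deriv (fun t => v x t) =ᶠ[nhds y] fun t => vy (x, t) :=
      hop.mono fun t ht => (hy_slice x t ht).deriv
    rw [h1.deriv_eq]
    have h2 : HasDerivAt (fun t => vy (x, t)) ((e2.comp (H (x, y))) (0, 1)) y := by
      exact (hvyd _ hp).comp_hasDerivAt y ((hasDerivAt_const y x).prodMk (hasDerivAt_id y))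
    rw [h2.deriv]
    simp [e2]
  -- PDE in Fréchet form
  have hPDE : ∀ p : ℝ × ℝ, p ∈ Q →
      H p (1, 0) (1, 0) + H p (0, 1) (0, 1) + μ * V p = 0 := by
    intro p hp
    obtain ⟨x, y⟩ := p
    have hx : x ∈ Set.Icc (0:ℝ) 1 := ⟨hp.1.1, hp.2.1⟩
    have hy : y ∈ Set.Icc (0:ℝ) 1 := ⟨hp.1.2, hp.2.2⟩
    have hU' := hQU hp
    have := heq x hx y hy
    rw [hxx x y hU', hyy x y hU'] at this
    exact this
  -- boundary conditions in Fréchet form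
  have hvx0 : ∀ y ∈ Set.Icc (0:ℝ) 1, vx (0, y) = 0 := by
    intro y hy
    rw [← (hx_slice 0 y (hQU (hmemQ 0 y (by norm_num) hy))).deriv]
    exact hneu0 y hy
  have hvx1 : ∀ y ∈ Set.Icc (0:ℝ) 1, vx (1, y) = 0 := by
    intro y hy
    rw [← (hx_slice 1 y (hQU (hmemQ 1 y (by norm_num) hy))).deriv]
    exact hneu1 y hy
  have hvxD0 : ∀ x ∈ Set.Icc (0:ℝ) 1, vx (x, 0) = 0 := by
    intro x hx
    have hU' := hQU (hmemQ x 0 hx (by norm_num))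
    have h1 : HasDerivWithinAt (fun s => v s 0) (vx (x, 0)) (Set.Icc 0 1) x :=
      (hx_slice x 0 hU').hasDerivWithinAt
    have h2 : HasDerivWithinAt (fun _ : ℝ => (0:ℝ)) (vx (x, 0)) (Set.Icc 0 1) x :=
      h1.congr (fun s hs => (hdir0 s hs).symm) (hdir0 x hx).symm
    have h3 := h2.derivWithin (uniqueDiffOn_Icc zero_lt_one x hx)
    have h4 := (hasDerivWithinAt_const x (Set.Icc (0:ℝ) 1) (0:ℝ)).derivWithin
      (uniqueDiffOn_Icc zero_lt_one x hx)
    exact h3.symm.trans h4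
  have hvxD1 : ∀ x ∈ Set.Icc (0:ℝ) 1, vx (x, 1) = 0 := by
    intro x hx
    have hU' := hQU (hmemQ x 1 hx (by norm_num))
    have h1 : HasDerivWithinAt (fun s => v s 1) (vx (x, 1)) (Set.Icc 0 1) x :=
      (hx_slice x 1 hU').hasDerivWithinAt
    have h2 : HasDerivWithinAt (fun _ : ℝ => (0:ℝ)) (vx (x, 1)) (Set.Icc 0 1) x :=
      h1.congr (fun s hs => (hdir1 s hs).symm) (hdir1 x hx).symm
    have h3 := h2.derivWithin (uniqueDiffOn_Icc zero_lt_one x hx)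
    have h4 := (hasDerivWithinAt_const x (Set.Icc (0:ℝ) 1) (0:ℝ)).derivWithin
      (uniqueDiffOn_Icc zero_lt_one x hx)
    exact h3.symm.trans h4
  -- the multiplier field
  set F : ℝ × ℝ → ℝ := fun p =>
    (p.1 - 1/2) * (vx p * vx p - vy p * vy p) * (1/2) + (p.2 - 1/2) * (vx p * vy p)
      + μ * (p.1 - 1/2) * (V p * V p) * (1/2) with hFdef
  set G : ℝ × ℝ → ℝ := fun p =>
    (p.2 - 1/2) * (vy p * vy p - vx p * vx p) * (1/2) + (p.1 - 1/2) * (vx p * vy p)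
      + μ * (p.2 - 1/2) * (V p * V p) * (1/2) with hGdef
  have hfst : ∀ p : ℝ × ℝ, HasFDerivAt (fun q : ℝ × ℝ => q.1 - 1/2)
      (ContinuousLinearMap.fst ℝ ℝ ℝ) p := fun p => (hasFDerivAt_fst).sub_const _
  have hsnd : ∀ p : ℝ × ℝ, HasFDerivAt (fun q : ℝ × ℝ => q.2 - 1/2)
      (ContinuousLinearMap.snd ℝ ℝ ℝ) p := fun p => (hasFDerivAt_snd).sub_const _
  have key : ∀ p ∈ U,
      HasFDerivAt F (fderiv ℝ F p) p ∧ HasFDerivAt G (fderiv ℝ G p) p ∧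
      fderiv ℝ F p (1, 0) + fderiv ℝ G p (0, 1) =
        μ * (V p * V p)
        + ((p.1 - 1/2) * vx p + (p.2 - 1/2) * vy p)
            * (H p (1,0) (1,0) + H p (0,1) (0,1) + μ * V p)
        + ((p.2 - 1/2) * vx p - (p.1 - 1/2) * vy p) * (H p (1,0) (0,1) - H p (0,1) (1,0)) := by
    intro p hp
    have hF : HasFDerivAt F _ p :=
      ((((hfst p).mul (((hvxd p hp).mul (hvxd p hp)).sub ((hvyd p hp).mul (hvyd p hp)))).mul_const
          ((1:ℝ)/2)).add ((hsnd p).mul ((hvxd p hp).mul (hvyd p hp)))).add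
        ((((hfst p).const_mul μ).mul ((hVd p hp).mul (hVd p hp))).mul_const ((1:ℝ)/2))
    have hG : HasFDerivAt G _ p :=
      ((((hsnd p).mul (((hvyd p hp).mul (hvyd p hp)).sub ((hvxd p hp).mul (hvxd p hp)))).mul_const
          ((1:ℝ)/2)).add ((hfst p).mul ((hvxd p hp).mul (hvyd p hp)))).add
        ((((hsnd p).const_mul μ).mul ((hVd p hp).mul (hVd p hp))).mul_const ((1:ℝ)/2))
    refine ⟨hF.differentiableAt.hasFDerivAt, hG.differentiableAt.hasFDerivAt, ?_⟩
    rw [hF.fderiv, hG.fderiv]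
    simp only [ContinuousLinearMap.add_apply, ContinuousLinearMap.smul_apply,
      ContinuousLinearMap.sub_apply, ContinuousLinearMap.comp_apply,
      ContinuousLinearMap.apply_apply, ContinuousLinearMap.coe_fst',
      ContinuousLinearMap.coe_snd', ContinuousLinearMap.smulRight_apply,
      ContinuousLinearMap.one_apply, smul_eq_mul, hWapp1, hWapp2, he1, he2, Pi.mul_apply, Pi.sub_apply]
    ring
  -- divergence equals μ v² on Q
  have hdivQ : ∀ p ∈ Q, fderiv ℝ F p (1, 0) + fderiv ℝ G p (0, 1) = μ * (V p * V p) := by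
    intro p hp
    rw [(key p (hQU hp)).2.2, hPDE p hp, hsym p (hQU hp) (1,0) (0,1)]
    ring
  -- continuity
  have hVc : ContinuousOn V U := hv.continuousOn
  have hWc : ContinuousOn W U := hW1.continuousOn
  have hvxc : ContinuousOn vx U := hWc.clm_apply continuousOn_const
  have hvyc : ContinuousOn vy U := hWc.clm_apply continuousOn_const
  have hFc : ContinuousOn F U := by
    apply ContinuousOn.add
    apply ContinuousOn.add
    · exact ((continuousOn_fst.sub continuousOn_const).mul
        ((hvxc.mul hvxc).sub (hvyc.mul hvyc))).mul continuousOn_const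
    · exact (continuousOn_snd.sub continuousOn_const).mul (hvxc.mul hvyc)
    · exact ((continuousOn_const.mul (continuousOn_fst.sub continuousOn_const)).mul
        (hVc.mul hVc)).mul continuousOn_const
  have hGc : ContinuousOn G U := by
    apply ContinuousOn.add
    apply ContinuousOn.add
    · exact ((continuousOn_snd.sub continuousOn_const).mul
        ((hvyc.mul hvyc).sub (hvxc.mul hvxc))).mul continuousOn_const
    · exact (continuousOn_fst.sub continuousOn_const).mul (hvxc.mul hvyc)
    · exact ((continuousOn_const.mul (continuousOn_snd.sub continuousOn_const)).mul
        (hVc.mul hVc)).mul continuousOn_const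
  have hSQ : (Set.uIcc (0:ℝ) 1 ×ˢ Set.uIcc (0:ℝ) 1) = Q := by
    rw [Set.uIcc_of_le (zero_le_one' ℝ), Set.Icc_prod_Icc]
  have hIoo : Set.Ioo (min (0:ℝ) 1) (max (0:ℝ) 1) ×ˢ Set.Ioo (min (0:ℝ) 1) (max (0:ℝ) 1) ⊆ Q := by
    rw [min_eq_left (zero_le_one' ℝ), max_eq_right (zero_le_one' ℝ)]
    intro p hp
    exact hmemQ p.1 p.2 ⟨hp.1.1.le, hp.1.2.le⟩ ⟨hp.2.1.le, hp.2.2.le⟩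
  -- integrability of the divergence
  have hQcompact : IsCompact Q := isCompact_Icc
  have hQmeas : MeasurableSet Q := measurableSet_Icc
  have hInt : IntegrableOn (fun p => fderiv ℝ F p (1, 0) + fderiv ℝ G p (0, 1))
      (Set.uIcc (0:ℝ) 1 ×ˢ Set.uIcc (0:ℝ) 1) := by
    rw [hSQ]
    have h1 : IntegrableOn (fun p => μ * (V p * V p)) Q :=
      ((continuousOn_const.mul ((hVc.mono hQU).mul (hVc.mono hQU)))).integrableOn_compact
        hQcompact
    exact h1.congr_fun (fun p hp => (hdivQ p hp).symm) hQmeas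
  -- divergence theorem
  have hdt := integral2_divergence_prod_of_hasFDerivAt_off_countable F G
    (fun p => fderiv ℝ F p) (fun p => fderiv ℝ G p) 0 0 1 1 ∅ Set.countable_empty
    (hFc.mono (by rw [hSQ]; exact hQU)) (hGc.mono (by rw [hSQ]; exact hQU))
    (fun p hp => (key p (hQU (hIoo (hp.1)))).1)
    (fun p hp => (key p (hQU (hIoo (hp.1)))).2.1)
    hInt
  -- LHS of divergence theorem equals μ
  have hL : (∫ x in (0:ℝ)..1, ∫ y in (0:ℝ)..1,
      (fderiv ℝ F (x, y) (1, 0) + fderiv ℝ G (x, y) (0, 1))) = μ := by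
    have h1 : (∫ x in (0:ℝ)..1, ∫ y in (0:ℝ)..1,
        (fderiv ℝ F (x, y) (1, 0) + fderiv ℝ G (x, y) (0, 1)))
        = ∫ x in (0:ℝ)..1, μ * ∫ y in (0:ℝ)..1, (v x y) ^ 2 := by
      apply integral_congr
      intro x hx
      rw [Set.uIcc_of_le (zero_le_one' ℝ)] at hx
      show (∫ y in (0:ℝ)..1, (fderiv ℝ F (x, y) (1, 0) + fderiv ℝ G (x, y) (0, 1)))
        = μ * ∫ y in (0:ℝ)..1, (v x y) ^ 2
      rw [← intervalIntegral.integral_const_mul]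
      apply integral_congr
      intro y hy
      rw [Set.uIcc_of_le (zero_le_one' ℝ)] at hy
      show fderiv ℝ F (x, y) (1, 0) + fderiv ℝ G (x, y) (0, 1) = μ * (v x y) ^ 2
      rw [hdivQ (x, y) (hmemQ x y hx hy)]
      show μ * (v x y * v x y) = μ * (v x y) ^ 2
      ring
    rw [h1, intervalIntegral.integral_const_mul, hnorm, mul_one]
  beta_reduce at hdt
  rw [hL] at hdt
  -- rewrite goal derivatives in terms of vy
  have hgB0 : (∫ y in (0:ℝ)..1, (deriv (fun t : ℝ => v 0 t) y) ^ 2)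
      = ∫ y in (0:ℝ)..1, (vy (0, y)) ^ 2 := by
    apply integral_congr
    intro y hy
    rw [Set.uIcc_of_le (zero_le_one' ℝ)] at hy
    show (deriv (fun t : ℝ => v 0 t) y) ^ 2 = (vy (0, y)) ^ 2
    rw [(hy_slice 0 y (hQU (hmemQ 0 y (by norm_num) hy))).deriv]
  have hgB1 : (∫ y in (0:ℝ)..1, (deriv (fun t : ℝ => v 1 t) y) ^ 2)
      = ∫ y in (0:ℝ)..1, (vy (1, y)) ^ 2 := by
    apply integral_congr
    intro y hy
    rw [Set.uIcc_of_le (zero_le_one' ℝ)] at hy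
    show (deriv (fun t : ℝ => v 1 t) y) ^ 2 = (vy (1, y)) ^ 2
    rw [(hy_slice 1 y (hQU (hmemQ 1 y (by norm_num) hy))).deriv]
  have hgC0 : (∫ x in (0:ℝ)..1, (deriv (fun t : ℝ => v x t) 0) ^ 2)
      = ∫ x in (0:ℝ)..1, (vy (x, 0)) ^ 2 := by
    apply integral_congr
    intro x hx
    rw [Set.uIcc_of_le (zero_le_one' ℝ)] at hx
    show (deriv (fun t : ℝ => v x t) 0) ^ 2 = (vy (x, 0)) ^ 2
    rw [(hy_slice x 0 (hQU (hmemQ x 0 hx (by norm_num)))).deriv]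
  have hgC1 : (∫ x in (0:ℝ)..1, (deriv (fun t : ℝ => v x t) 1) ^ 2)
      = ∫ x in (0:ℝ)..1, (vy (x, 1)) ^ 2 := by
    apply integral_congr
    intro x hx
    rw [Set.uIcc_of_le (zero_le_one' ℝ)] at hx
    show (deriv (fun t : ℝ => v x t) 1) ^ 2 = (vy (x, 1)) ^ 2
    rw [(hy_slice x 1 (hQU (hmemQ x 1 hx (by norm_num)))).deriv]
  rw [hgB0, hgB1, hgC0, hgC1]
  -- integrability of boundary integrands
  have hvyIcc0 : ContinuousOn (fun y : ℝ => (vy (0, y)) ^ 2) (Set.Icc (0:ℝ) 1) := by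
    have : ContinuousOn (fun y : ℝ => vy (0, y)) (Set.Icc (0:ℝ) 1) :=
      hvyc.comp (by fun_prop) (fun y hy => hQU (hmemQ 0 y (by norm_num) hy))
    exact this.pow 2
  have hvyIcc1 : ContinuousOn (fun y : ℝ => (vy (1, y)) ^ 2) (Set.Icc (0:ℝ) 1) := by
    have : ContinuousOn (fun y : ℝ => vy (1, y)) (Set.Icc (0:ℝ) 1) :=
      hvyc.comp (by fun_prop) (fun y hy => hQU (hmemQ 1 y (by norm_num) hy))
    exact this.pow 2
  have hvIcc0 : ContinuousOn (fun y : ℝ => (v 0 y) ^ 2) (Set.Icc (0:ℝ) 1) := by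
    have : ContinuousOn (fun y : ℝ => V (0, y)) (Set.Icc (0:ℝ) 1) :=
      hVc.comp (by fun_prop) (fun y hy => hQU (hmemQ 0 y (by norm_num) hy))
    exact this.pow 2
  have hvIcc1 : ContinuousOn (fun y : ℝ => (v 1 y) ^ 2) (Set.Icc (0:ℝ) 1) := by
    have : ContinuousOn (fun y : ℝ => V (1, y)) (Set.Icc (0:ℝ) 1) :=
      hVc.comp (by fun_prop) (fun y hy => hQU (hmemQ 1 y (by norm_num) hy))
    exact this.pow 2
  have hint1 : IntervalIntegrable (fun y : ℝ => (vy (0, y)) ^ 2) volume 0 1 :=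
    (hvyIcc0.mono (by rw [Set.uIcc_of_le (zero_le_one' ℝ)])).intervalIntegrable
  have hint2 : IntervalIntegrable (fun y : ℝ => (vy (1, y)) ^ 2) volume 0 1 :=
    (hvyIcc1.mono (by rw [Set.uIcc_of_le (zero_le_one' ℝ)])).intervalIntegrable
  have hint3 : IntervalIntegrable (fun y : ℝ => (v 0 y) ^ 2) volume 0 1 :=
    (hvIcc0.mono (by rw [Set.uIcc_of_le (zero_le_one' ℝ)])).intervalIntegrable
  have hint4 : IntervalIntegrable (fun y : ℝ => (v 1 y) ^ 2) volume 0 1 :=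
    (hvIcc1.mono (by rw [Set.uIcc_of_le (zero_le_one' ℝ)])).intervalIntegrable
  -- boundary integrals
  have hbF0 : (∫ y in (0:ℝ)..1, F (0, y))
      = (1/4) * (∫ y in (0:ℝ)..1, (vy (0, y)) ^ 2)
        - (μ/4) * (∫ y in (0:ℝ)..1, (v 0 y) ^ 2) := by
    have h1 : (∫ y in (0:ℝ)..1, F (0, y))
        = ∫ y in (0:ℝ)..1, ((1/4) * (vy (0, y)) ^ 2 - (μ/4) * (v 0 y) ^ 2) := by
      apply integral_congr
      intro y hy
      rw [Set.uIcc_of_le (zero_le_one' ℝ)] at hy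
      show ((0:ℝ) - 1/2) * (vx (0, y) * vx (0, y) - vy (0, y) * vy (0, y)) * (1/2)
          + (y - 1/2) * (vx (0, y) * vy (0, y))
          + μ * ((0:ℝ) - 1/2) * (V (0, y) * V (0, y)) * (1/2) = _
      rw [hvx0 y hy]
      show _ = (1/4) * (vy (0, y)) ^ 2 - (μ/4) * (v 0 y) ^ 2
      have : V (0, y) = v 0 y := rfl
      rw [this]
      ring
    rw [h1, intervalIntegral.integral_sub ((hint1.const_mul _)) ((hint3.const_mul _)),
      intervalIntegral.integral_const_mul, intervalIntegral.integral_const_mul]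
  have hbF1 : (∫ y in (0:ℝ)..1, F (1, y))
      = -(1/4) * (∫ y in (0:ℝ)..1, (vy (1, y)) ^ 2)
        + (μ/4) * (∫ y in (0:ℝ)..1, (v 1 y) ^ 2) := by
    have h1 : (∫ y in (0:ℝ)..1, F (1, y))
        = ∫ y in (0:ℝ)..1, (-(1/4) * (vy (1, y)) ^ 2 + (μ/4) * (v 1 y) ^ 2) := by
      apply integral_congr
      intro y hy
      rw [Set.uIcc_of_le (zero_le_one' ℝ)] at hy
      show ((1:ℝ) - 1/2) * (vx (1, y) * vx (1, y) - vy (1, y) * vy (1, y)) * (1/2)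
          + (y - 1/2) * (vx (1, y) * vy (1, y))
          + μ * ((1:ℝ) - 1/2) * (V (1, y) * V (1, y)) * (1/2) = _
      rw [hvx1 y hy]
      show _ = -(1/4) * (vy (1, y)) ^ 2 + (μ/4) * (v 1 y) ^ 2
      have : V (1, y) = v 1 y := rfl
      rw [this]
      ring
    rw [h1, intervalIntegral.integral_add ((hint2.const_mul _)) ((hint4.const_mul _)),
      intervalIntegral.integral_const_mul, intervalIntegral.integral_const_mul]
  have hbG0 : (∫ x in (0:ℝ)..1, G (x, 0))
      = -(1/4) * (∫ x in (0:ℝ)..1, (vy (x, 0)) ^ 2) := by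
    have h1 : (∫ x in (0:ℝ)..1, G (x, 0))
        = ∫ x in (0:ℝ)..1, (-(1/4) * (vy (x, 0)) ^ 2) := by
      apply integral_congr
      intro x hx
      rw [Set.uIcc_of_le (zero_le_one' ℝ)] at hx
      show ((0:ℝ) - 1/2) * (vy (x, 0) * vy (x, 0) - vx (x, 0) * vx (x, 0)) * (1/2)
          + (x - 1/2) * (vx (x, 0) * vy (x, 0))
          + μ * ((0:ℝ) - 1/2) * (V (x, 0) * V (x, 0)) * (1/2) = _
      rw [hvxD0 x hx]
      have : V (x, 0) = v x 0 := rfl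
      rw [this, hdir0 x hx]
      ring
    rw [h1, intervalIntegral.integral_const_mul]
  have hbG1 : (∫ x in (0:ℝ)..1, G (x, 1))
      = (1/4) * (∫ x in (0:ℝ)..1, (vy (x, 1)) ^ 2) := by
    have h1 : (∫ x in (0:ℝ)..1, G (x, 1))
        = ∫ x in (0:ℝ)..1, ((1/4) * (vy (x, 1)) ^ 2) := by
      apply integral_congr
      intro x hx
      rw [Set.uIcc_of_le (zero_le_one' ℝ)] at hx
      show ((1:ℝ) - 1/2) * (vy (x, 1) * vy (x, 1) - vx (x, 1) * vx (x, 1)) * (1/2)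
          + (x - 1/2) * (vx (x, 1) * vy (x, 1))
          + μ * ((1:ℝ) - 1/2) * (V (x, 1) * V (x, 1)) * (1/2) = _
      rw [hvxD1 x hx]
      have : V (x, 1) = v x 1 := rfl
      rw [this, hdir1 x hx]
      ring
    rw [h1, intervalIntegral.integral_const_mul]
  rw [hbF0, hbF1, hbG0, hbG1] at hdt
  linear_combination (-2:ℝ) * hdt
end

section
/- Let v be a real-valued function that is twice continuously differentiable on an open neighborhood of the closed unit square Q = [0,1]×[0,1], and let μ ∈ ℝ. Assume: (i) ∂²v/∂x² + ∂²v/∂y² + μv = 0 on Q; (ii) ∂v/∂x(0,y) = ∂v/∂x(1,y) = 0 for all y ∈ [0,1]; (iii) ∂v/∂y(x,1) = 0 for all x ∈ [0,1]; (iv) v(x,0) = 0 for all x ∈ [0,1]; (v) ∫_Q v² dxdy = 1. Then μ·( (1/2)∫₀¹ v(0,y)² dy + (1/2)∫₀¹ v(1,y)² dy + (1/2)∫₀¹ v(x,1)² dx − 2 ) = (1/2)∫₀¹ (∂v/∂y(0,y))² dy + (1/2)∫₀¹ (∂v/∂y(1,y))² dy + (1/2)∫₀¹ (∂v/∂x(x,1))²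 dx − (1/2)∫₀¹ (∂v/∂y(x,0))² dx. -/
open MeasureTheory intervalIntegral
open Set

/-- weighted IBP: ∫ (x-1/2) g g' = ¼g(1)²+¼g(0)² − ½∫g². -/
lemma key_ibp (g g' : ℝ → ℝ) (hg : ∀ x ∈ Icc (0:ℝ) 1, HasDerivAt g (g' x) x)
    (hg' : ContinuousOn g' (Icc 0 1)) :
    ∫ x in (0:ℝ)..1, (x - 1/2) * (g x * g' x)
      = (1/4) * g 1 ^ 2 + (1/4) * g 0 ^ 2 - (1/2) * ∫ x in (0:ℝ)..1, g x ^ 2 := by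
  have hc : ContinuousOn g (Icc 0 1) := fun x hx => ((hg x hx).continuousAt).continuousWithinAt
  have hH : ∀ x ∈ uIcc (0:ℝ) 1, HasDerivAt (fun x => (x - 1/2) * g x ^ 2)
      (g x ^ 2 + (x - 1/2) * (2 * (g x * g' x))) x := by
    intro x hx
    rw [uIcc_of_le (by norm_num)] at hx
    have h1 : HasDerivAt (fun x : ℝ => x - 1/2) 1 x := (hasDerivAt_id x).sub_const _
    have h2 : HasDerivAt (fun x => g x ^ 2) (2 * g x * g' x) x := by
      simpa [mul_comm, mul_assoc] using ((hg x hx).fun_pow 2)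
    exact (h1.fun_mul h2).congr_deriv (by ring)
  have hint : IntervalIntegrable (fun x => g x ^ 2 + (x - 1/2) * (2 * (g x * g' x)))
      volume 0 1 := by
    apply ContinuousOn.intervalIntegrable
    rw [uIcc_of_le (by norm_num)]
    exact (hc.pow 2).add ((continuousOn_id.sub continuousOn_const).mul
      (continuousOn_const.mul (hc.mul hg')))
  have h := integral_eq_sub_of_hasDerivAt hH hint
  have hsplit : (∫ x in (0:ℝ)..1, (g x ^ 2 + (x - 1/2) * (2 * (g x * g' x))))
      = (∫ x in (0:ℝ)..1, g x ^ 2) + 2 * ∫ x in (0:ℝ)..1, (x - 1/2) * (g x * g' x) := by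
    have hfe : (fun x => g x ^ 2 + (x - 1/2) * (2 * (g x * g' x)))
        = fun x => g x ^ 2 + 2 * ((x - 1/2) * (g x * g' x)) := by funext x; ring
    rw [hfe, intervalIntegral.integral_add, intervalIntegral.integral_const_mul]
    · apply ContinuousOn.intervalIntegrable
      rw [uIcc_of_le (by norm_num)]
      exact hc.pow 2
    · apply ContinuousOn.intervalIntegrable
      rw [uIcc_of_le (by norm_num)]
      exact continuousOn_const.mul (((continuousOn_id.sub continuousOn_const).mul (hc.mul hg')))
  rw [hsplit] at h
  norm_num at h ⊢
  linarith

lemma key_ftc (g1 g1' g2 g2' : ℝ → ℝ)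
    (h1 : ∀ x ∈ Icc (0:ℝ) 1, HasDerivAt g1 (g1' x) x)
    (h2 : ∀ x ∈ Icc (0:ℝ) 1, HasDerivAt g2 (g2' x) x)
    (hc1' : ContinuousOn g1' (Icc 0 1)) (hc2' : ContinuousOn g2' (Icc 0 1)) :
    ∫ x in (0:ℝ)..1, (g1' x * g2 x + g1 x * g2' x) = g1 1 * g2 1 - g1 0 * g2 0 := by
  have hc1 : ContinuousOn g1 (Icc 0 1) := fun x hx => ((h1 x hx).continuousAt).continuousWithinAt
  have hc2 : ContinuousOn g2 (Icc 0 1) := fun x hx => ((h2 x hx).continuousAt).continuousWithinAt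
  have hH : ∀ x ∈ uIcc (0:ℝ) 1, HasDerivAt (fun x => g1 x * g2 x)
      (g1' x * g2 x + g1 x * g2' x) x := by
    intro x hx
    rw [uIcc_of_le (by norm_num)] at hx
    exact (h1 x hx).mul (h2 x hx)
  exact integral_eq_sub_of_hasDerivAt hH (ContinuousOn.intervalIntegrable (by
    rw [uIcc_of_le (by norm_num)]
    exact (hc1'.mul hc2).add (hc1.mul hc2')))


lemma sq_integrable (f : ℝ → ℝ → ℝ)
    (hf : ContinuousOn (fun p : ℝ × ℝ => f p.1 p.2) (Icc ((0:ℝ),(0:ℝ)) (1,1))) :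
    IntegrableOn (fun p : ℝ × ℝ => f p.1 p.2) (Ioc (0:ℝ) 1 ×ˢ Ioc (0:ℝ) 1) volume := by
  apply (hf.integrableOn_compact isCompact_Icc).mono_set
  rw [← Icc_prod_Icc]
  exact Set.prod_mono Ioc_subset_Icc_self Ioc_subset_Icc_self

lemma sq_int (f : ℝ → ℝ → ℝ)
    (hf : ContinuousOn (fun p : ℝ × ℝ => f p.1 p.2) (Icc ((0:ℝ),(0:ℝ)) (1,1))) :
    (∫ x in (0:ℝ)..1, ∫ y in (0:ℝ)..1, f x y)
      = ∫ p in (Ioc (0:ℝ) 1 ×ˢ Ioc (0:ℝ) 1), f p.1 p.2 := by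
  have hint := sq_integrable f hf
  rw [Measure.volume_eq_prod] at hint ⊢
  rw [setIntegral_prod _ hint]
  simp_rw [integral_of_le (zero_le_one (α := ℝ))]

lemma sq_int_symm (f : ℝ → ℝ → ℝ)
    (hf : ContinuousOn (fun p : ℝ × ℝ => f p.1 p.2) (Icc ((0:ℝ),(0:ℝ)) (1,1))) :
    (∫ y in (0:ℝ)..1, ∫ x in (0:ℝ)..1, f x y)
      = ∫ p in (Ioc (0:ℝ) 1 ×ˢ Ioc (0:ℝ) 1), f p.1 p.2 := by
  have hint := sq_integrable f hf
  rw [Measure.volume_eq_prod] at hint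
  rw [IntegrableOn, ← Measure.prod_restrict] at hint
  have heq : (∫ p in (Ioc (0:ℝ) 1 ×ˢ Ioc (0:ℝ) 1), f p.1 p.2)
      = ∫ p, f p.1 p.2 ∂(((volume : Measure ℝ).restrict (Ioc 0 1)).prod
          ((volume : Measure ℝ).restrict (Ioc 0 1))) := by
    rw [Measure.prod_restrict, ← Measure.volume_eq_prod]
  rw [heq, integral_prod_symm _ hint]
  simp_rw [integral_of_le (zero_le_one (α := ℝ))]

lemma marg_right (f : ℝ → ℝ → ℝ)
    (hf : ContinuousOn (fun p : ℝ × ℝ => f p.1 p.2) (Icc ((0:ℝ),(0:ℝ)) (1,1))) :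
    IntervalIntegrable (fun x => ∫ y in (0:ℝ)..1, f x y) volume 0 1 := by
  have hint := sq_integrable f hf
  rw [IntegrableOn, Measure.volume_eq_prod, ← Measure.prod_restrict] at hint
  have h2 := hint.integral_prod_left
  rw [intervalIntegrable_iff_integrableOn_Ioc_of_le zero_le_one]
  have he : (fun x => ∫ y in (0:ℝ)..1, f x y)
      = fun x => ∫ y, f x y ∂((volume : Measure ℝ).restrict (Ioc 0 1)) := by
    funext x; exact intervalIntegral.integral_of_le zero_le_one
  rw [IntegrableOn, he]
  exact h2

lemma marg_left (f : ℝ → ℝ → ℝ)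
    (hf : ContinuousOn (fun p : ℝ × ℝ => f p.1 p.2) (Icc ((0:ℝ),(0:ℝ)) (1,1))) :
    IntervalIntegrable (fun y => ∫ x in (0:ℝ)..1, f x y) volume 0 1 := by
  have hint := sq_integrable f hf
  rw [IntegrableOn, Measure.volume_eq_prod, ← Measure.prod_restrict] at hint
  have h2 := hint.integral_prod_right
  rw [intervalIntegrable_iff_integrableOn_Ioc_of_le zero_le_one]
  have he : (fun y => ∫ x in (0:ℝ)..1, f x y)
      = fun y => ∫ x, f x y ∂((volume : Measure ℝ).restrict (Ioc 0 1)) := by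
    funext y; exact intervalIntegral.integral_of_le zero_le_one
  rw [IntegrableOn, he]
  exact h2


lemma slice_x (g : ℝ → ℝ → ℝ)
    (hg : ContinuousOn (fun p : ℝ × ℝ => g p.1 p.2) (Icc ((0:ℝ),(0:ℝ)) (1,1)))
    {y : ℝ} (hy : y ∈ Icc (0:ℝ) 1) : ContinuousOn (fun x => g x y) (Icc 0 1) := by
  have h2 : ContinuousOn ((fun p : ℝ × ℝ => g p.1 p.2) ∘ (fun x => (x, y))) (Icc 0 1) := by
    apply hg.comp ((continuous_id.prodMk continuous_const).continuousOn)
    intro x hx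
    exact ⟨⟨hx.1, hy.1⟩, ⟨hx.2, hy.2⟩⟩
  exact h2

lemma slice_y (g : ℝ → ℝ → ℝ)
    (hg : ContinuousOn (fun p : ℝ × ℝ => g p.1 p.2) (Icc ((0:ℝ),(0:ℝ)) (1,1)))
    {x : ℝ} (hx : x ∈ Icc (0:ℝ) 1) : ContinuousOn (fun y => g x y) (Icc 0 1) := by
  have h2 : ContinuousOn ((fun p : ℝ × ℝ => g p.1 p.2) ∘ (fun y => (x, y))) (Icc 0 1) := by
    apply hg.comp ((continuous_const.prodMk continuous_id).continuousOn)
    intro y hy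
    exact ⟨⟨hx.1, hy.1⟩, ⟨hx.2, hy.2⟩⟩
  exact h2

lemma rellich_core (v va vb vxx vyy vm : ℝ → ℝ → ℝ) (μ : ℝ)
    (hcv : ContinuousOn (fun p : ℝ × ℝ => v p.1 p.2) (Icc ((0:ℝ),(0:ℝ)) (1,1)))
    (hcva : ContinuousOn (fun p : ℝ × ℝ => va p.1 p.2) (Icc ((0:ℝ),(0:ℝ)) (1,1)))
    (hcvb : ContinuousOn (fun p : ℝ × ℝ => vb p.1 p.2) (Icc ((0:ℝ),(0:ℝ)) (1,1)))
    (hcvxx : ContinuousOn (fun p : ℝ × ℝ => vxx p.1 p.2) (Icc ((0:ℝ),(0:ℝ)) (1,1)))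
    (hcvyy : ContinuousOn (fun p : ℝ × ℝ => vyy p.1 p.2) (Icc ((0:ℝ),(0:ℝ)) (1,1)))
    (hcvm : ContinuousOn (fun p : ℝ × ℝ => vm p.1 p.2) (Icc ((0:ℝ),(0:ℝ)) (1,1)))
    (hdax : ∀ x ∈ Icc (0:ℝ) 1, ∀ y ∈ Icc (0:ℝ) 1, HasDerivAt (fun s => v s y) (va x y) x)
    (hdby : ∀ x ∈ Icc (0:ℝ) 1, ∀ y ∈ Icc (0:ℝ) 1, HasDerivAt (fun t => v x t) (vb x y) y)
    (hdax2 : ∀ x ∈ Icc (0:ℝ) 1, ∀ y ∈ Icc (0:ℝ) 1, HasDerivAt (fun s => va s y) (vxx x y) x)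
    (hdbx2 : ∀ x ∈ Icc (0:ℝ) 1, ∀ y ∈ Icc (0:ℝ) 1, HasDerivAt (fun s => vb s y) (vm x y) x)
    (hday2 : ∀ x ∈ Icc (0:ℝ) 1, ∀ y ∈ Icc (0:ℝ) 1, HasDerivAt (fun t => va x t) (vm x y) y)
    (hdby2 : ∀ x ∈ Icc (0:ℝ) 1, ∀ y ∈ Icc (0:ℝ) 1, HasDerivAt (fun t => vb x t) (vyy x y) y)
    (hPDE : ∀ x ∈ Icc (0:ℝ) 1, ∀ y ∈ Icc (0:ℝ) 1, vxx x y + vyy x y + μ * v x y = 0)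
    (hA0 : ∀ y ∈ Icc (0:ℝ) 1, va 0 y = 0) (hA1 : ∀ y ∈ Icc (0:ℝ) 1, va 1 y = 0)
    (hAbot : ∀ x ∈ Icc (0:ℝ) 1, va x 0 = 0) (hBtop : ∀ x ∈ Icc (0:ℝ) 1, vb x 1 = 0)
    (hV0 : ∀ x ∈ Icc (0:ℝ) 1, v x 0 = 0)
    (hnorm : (∫ x in (0:ℝ)..1, ∫ y in (0:ℝ)..1, (v x y)^2) = 1) :
    μ * ((1/2) * (∫ y in (0:ℝ)..1, (v 0 y)^2) + (1/2) * (∫ y in (0:ℝ)..1, (v 1 y)^2)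
        + (1/2) * (∫ x in (0:ℝ)..1, (v x 1)^2) - 2)
      = (1/2) * (∫ y in (0:ℝ)..1, (vb 0 y)^2) + (1/2) * (∫ y in (0:ℝ)..1, (vb 1 y)^2)
        + (1/2) * (∫ x in (0:ℝ)..1, (va x 1)^2) - (1/2) * (∫ x in (0:ℝ)..1, (vb x 0)^2) := by
  have hu : uIcc (0:ℝ) 1 = Icc 0 1 := uIcc_of_le zero_le_one
  -- inner computation for P1
  have inner1 : ∀ y ∈ Icc (0:ℝ) 1, (∫ x in (0:ℝ)..1, (x - 1/2) * (va x y * vxx x y))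
      = -(1/2) * ∫ x in (0:ℝ)..1, (va x y)^2 := by
    intro y hy
    have k := key_ibp (fun x => va x y) (fun x => vxx x y)
        (fun x hx => hdax2 x hx y hy) (slice_x vxx hcvxx hy)
    beta_reduce at k
    rw [k, hA1 y hy, hA0 y hy]; ring

  -- inner computation for P3
  have inner3 : ∀ y ∈ Icc (0:ℝ) 1, (∫ x in (0:ℝ)..1, μ * ((x - 1/2) * (v x y * va x y)))
      = μ*(1/4)*(v 1 y)^2 + μ*(1/4)*(v 0 y)^2 - μ*(1/2) * ∫ x in (0:ℝ)..1, (v x y)^2 := by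
    intro y hy
    have k := key_ibp (fun x => v x y) (fun x => va x y)
        (fun x hx => hdax x hx y hy) (slice_x va hcva hy)
    beta_reduce at k
    rw [intervalIntegral.integral_const_mul, k]; ring
  -- inner computation for R
  have innerR : ∀ y ∈ Icc (0:ℝ) 1, (∫ x in (0:ℝ)..1, (x - 1/2) * (vb x y * vm x y))
      = (1/4)*(vb 1 y)^2 + (1/4)*(vb 0 y)^2 - (1/2) * ∫ x in (0:ℝ)..1, (vb x y)^2 := by
    intro y hy
    have k := key_ibp (fun x => vb x y) (fun x => vm x y)
        (fun x hx => hdbx2 x hx y hy) (slice_x vm hcvm hy)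
    beta_reduce at k
    rw [k]
  -- inner computation for P4
  have inner4 : ∀ y ∈ Icc (0:ℝ) 1, (∫ x in (0:ℝ)..1, (y - 1/2) * (vb x y * vxx x y))
      = -(∫ x in (0:ℝ)..1, (y - 1/2) * (vm x y * va x y)) := by
    intro y hy
    have k := key_ftc (fun x => vb x y) (fun x => vm x y) (fun x => va x y) (fun x => vxx x y)
        (fun x hx => hdbx2 x hx y hy) (fun x hx => hdax2 x hx y hy)
        (slice_x vm hcvm hy) (slice_x vxx hcvxx hy)
    beta_reduce at k
    rw [hA1 y hy, hA0 y hy, mul_zero, mul_zero, sub_zero] at k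
    have i1 : IntervalIntegrable (fun x => vm x y * va x y) volume 0 1 := by
      apply ContinuousOn.intervalIntegrable
      rw [hu]; exact (slice_x vm hcvm hy).mul (slice_x va hcva hy)
    have i2 : IntervalIntegrable (fun x => vb x y * vxx x y) volume 0 1 := by
      apply ContinuousOn.intervalIntegrable
      rw [hu]; exact (slice_x vb hcvb hy).mul (slice_x vxx hcvxx hy)
    rw [intervalIntegral.integral_add i1 i2] at k
    rw [intervalIntegral.integral_const_mul, intervalIntegral.integral_const_mul]
    have h5 : (∫ x in (0:ℝ)..1, vb x y * vxx x y) = -∫ x in (0:ℝ)..1, vm x y * va x y := by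
      linarith
    rw [h5]; ring
  -- inner computation for P2
  have inner2 : ∀ x ∈ Icc (0:ℝ) 1, (∫ y in (0:ℝ)..1, (x - 1/2) * (va x y * vyy x y))
      = -(∫ y in (0:ℝ)..1, (x - 1/2) * (vb x y * vm x y)) := by
    intro x hx
    have k := key_ftc (fun y => vb x y) (fun y => vyy x y) (fun y => va x y) (fun y => vm x y)
        (fun y hy => hdby2 x hx y hy) (fun y hy => hday2 x hx y hy)
        (slice_y vyy hcvyy hx) (slice_y vm hcvm hx)
    beta_reduce at k
    rw [hBtop x hx, hAbot x hx, zero_mul, mul_zero, sub_zero] at k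
    have i1 : IntervalIntegrable (fun y => vyy x y * va x y) volume 0 1 := by
      apply ContinuousOn.intervalIntegrable
      rw [hu]; exact (slice_y vyy hcvyy hx).mul (slice_y va hcva hx)
    have i2 : IntervalIntegrable (fun y => vb x y * vm x y) volume 0 1 := by
      apply ContinuousOn.intervalIntegrable
      rw [hu]; exact (slice_y vb hcvb hx).mul (slice_y vm hcvm hx)
    rw [intervalIntegral.integral_add i1 i2] at k
    have comm : (∫ y in (0:ℝ)..1, va x y * vyy x y) = ∫ y in (0:ℝ)..1, vyy x y * va x y :=
      intervalIntegral.integral_congr (fun y _ => mul_comm _ _)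
    rw [intervalIntegral.integral_const_mul, intervalIntegral.integral_const_mul, comm]
    have h5 : (∫ y in (0:ℝ)..1, vyy x y * va x y) = -∫ y in (0:ℝ)..1, vb x y * vm x y := by
      linarith
    rw [h5]; ring
  -- inner computation for R'
  have innerR' : ∀ x ∈ Icc (0:ℝ) 1, (∫ y in (0:ℝ)..1, (y - 1/2) * (vm x y * va x y))
      = (1/4)*(va x 1)^2 - (1/2) * ∫ y in (0:ℝ)..1, (va x y)^2 := by
    intro x hx
    have comm : (∫ y in (0:ℝ)..1, (y - 1/2) * (vm x y * va x y))
        = ∫ y in (0:ℝ)..1, (y - 1/2) * (va x y * vm x y) :=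
      intervalIntegral.integral_congr (fun y _ => by ring)
    have k := key_ibp (fun y => va x y) (fun y => vm x y)
        (fun y hy => hday2 x hx y hy) (slice_y vm hcvm hx)
    beta_reduce at k
    rw [comm, k, hAbot x hx]; ring
  -- inner computation for P5
  have inner5 : ∀ x ∈ Icc (0:ℝ) 1, (∫ y in (0:ℝ)..1, (y - 1/2) * (vb x y * vyy x y))
      = (1/4)*(vb x 0)^2 - (1/2) * ∫ y in (0:ℝ)..1, (vb x y)^2 := by
    intro x hx
    have k := key_ibp (fun y => vb x y) (fun y => vyy x y)
        (fun y hy => hdby2 x hx y hy) (slice_y vyy hcvyy hx)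
    beta_reduce at k
    rw [k, hBtop x hx]; ring
  -- inner computation for P6
  have inner6 : ∀ x ∈ Icc (0:ℝ) 1, (∫ y in (0:ℝ)..1, μ * ((y - 1/2) * (v x y * vb x y)))
      = μ*(1/4)*(v x 1)^2 - μ*(1/2) * ∫ y in (0:ℝ)..1, (v x y)^2 := by
    intro x hx
    have k := key_ibp (fun y => v x y) (fun y => vb x y)
        (fun y hy => hdby x hx y hy) (slice_y vb hcvb hx)
    beta_reduce at k
    rw [intervalIntegral.integral_const_mul, k, hV0 x hx]; ring
  -- uncurried continuity of the six pieces
  have hcP1 : ContinuousOn (fun p : ℝ × ℝ => (p.1 - 1/2) * (va p.1 p.2 * vxx p.1 p.2))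
      (Icc ((0:ℝ),(0:ℝ)) (1,1)) :=
    ((continuous_fst.sub continuous_const).continuousOn).mul (hcva.mul hcvxx)
  have hcP2 : ContinuousOn (fun p : ℝ × ℝ => (p.1 - 1/2) * (va p.1 p.2 * vyy p.1 p.2))
      (Icc ((0:ℝ),(0:ℝ)) (1,1)) :=
    ((continuous_fst.sub continuous_const).continuousOn).mul (hcva.mul hcvyy)
  have hcP3 : ContinuousOn (fun p : ℝ × ℝ => μ * ((p.1 - 1/2) * (v p.1 p.2 * va p.1 p.2)))
      (Icc ((0:ℝ),(0:ℝ)) (1,1)) :=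
    continuousOn_const.mul (((continuous_fst.sub continuous_const).continuousOn).mul
      (hcv.mul hcva))
  have hcP4 : ContinuousOn (fun p : ℝ × ℝ => (p.2 - 1/2) * (vb p.1 p.2 * vxx p.1 p.2))
      (Icc ((0:ℝ),(0:ℝ)) (1,1)) :=
    ((continuous_snd.sub continuous_const).continuousOn).mul (hcvb.mul hcvxx)
  have hcP5 : ContinuousOn (fun p : ℝ × ℝ => (p.2 - 1/2) * (vb p.1 p.2 * vyy p.1 p.2))
      (Icc ((0:ℝ),(0:ℝ)) (1,1)) :=
    ((continuous_snd.sub continuous_const).continuousOn).mul (hcvb.mul hcvyy)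
  have hcP6 : ContinuousOn (fun p : ℝ × ℝ => μ * ((p.2 - 1/2) * (v p.1 p.2 * vb p.1 p.2)))
      (Icc ((0:ℝ),(0:ℝ)) (1,1)) :=
    continuousOn_const.mul (((continuous_snd.sub continuous_const).continuousOn).mul
      (hcv.mul hcvb))
  have hcR : ContinuousOn (fun p : ℝ × ℝ => (p.1 - 1/2) * (vb p.1 p.2 * vm p.1 p.2))
      (Icc ((0:ℝ),(0:ℝ)) (1,1)) :=
    ((continuous_fst.sub continuous_const).continuousOn).mul (hcvb.mul hcvm)
  have hcR' : ContinuousOn (fun p : ℝ × ℝ => (p.2 - 1/2) * (vm p.1 p.2 * va p.1 p.2))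
      (Icc ((0:ℝ),(0:ℝ)) (1,1)) :=
    ((continuous_snd.sub continuous_const).continuousOn).mul (hcvm.mul hcva)
  have hcv2 : ContinuousOn (fun p : ℝ × ℝ => (v p.1 p.2)^2) (Icc ((0:ℝ),(0:ℝ)) (1,1)) :=
    hcv.pow 2
  have hcva2 : ContinuousOn (fun p : ℝ × ℝ => (va p.1 p.2)^2) (Icc ((0:ℝ),(0:ℝ)) (1,1)) :=
    hcva.pow 2
  have hcvb2 : ContinuousOn (fun p : ℝ × ℝ => (vb p.1 p.2)^2) (Icc ((0:ℝ),(0:ℝ)) (1,1)) :=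
    hcvb.pow 2
  -- outer computations
  have E1 : (∫ y in (0:ℝ)..1, ∫ x in (0:ℝ)..1, (x - 1/2) * (va x y * vxx x y))
      = -(1/2) * ∫ y in (0:ℝ)..1, ∫ x in (0:ℝ)..1, (va x y)^2 := by
    rw [intervalIntegral.integral_congr
      (g := fun y => -(1/2) * ∫ x in (0:ℝ)..1, (va x y)^2)
      (fun y hy => inner1 y (hu ▸ hy)), intervalIntegral.integral_const_mul]
  have E2 : (∫ x in (0:ℝ)..1, ∫ y in (0:ℝ)..1, (x - 1/2) * (va x y * vyy x y))
      = -(∫ x in (0:ℝ)..1, ∫ y in (0:ℝ)..1, (x - 1/2) * (vb x y * vm x y)) := by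
    rw [intervalIntegral.integral_congr
      (g := fun x => -(∫ y in (0:ℝ)..1, (x - 1/2) * (vb x y * vm x y)))
      (fun x hx => inner2 x (hu ▸ hx)), intervalIntegral.integral_neg]
  have E3 : (∫ y in (0:ℝ)..1, ∫ x in (0:ℝ)..1, μ * ((x - 1/2) * (v x y * va x y)))
      = μ*(1/4) * (∫ y in (0:ℝ)..1, (v 1 y)^2) + μ*(1/4) * (∫ y in (0:ℝ)..1, (v 0 y)^2)
        - μ*(1/2) * ∫ y in (0:ℝ)..1, ∫ x in (0:ℝ)..1, (v x y)^2 := by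
    have h1m : (1:ℝ) ∈ Icc (0:ℝ) 1 := by norm_num
    have h0m : (0:ℝ) ∈ Icc (0:ℝ) 1 := by norm_num
    have i1 : IntervalIntegrable (fun y => μ*(1/4)*(v 1 y)^2) volume 0 1 := by
      apply ContinuousOn.intervalIntegrable
      rw [hu]; exact continuousOn_const.mul ((slice_y v hcv h1m).pow 2)
    have i2 : IntervalIntegrable (fun y => μ*(1/4)*(v 0 y)^2) volume 0 1 := by
      apply ContinuousOn.intervalIntegrable
      rw [hu]; exact continuousOn_const.mul ((slice_y v hcv h0m).pow 2)
    have i3 : IntervalIntegrable (fun y => μ*(1/2) * ∫ x in (0:ℝ)..1, (v x y)^2) volume 0 1 :=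
      (marg_left (fun x y => (v x y)^2) hcv2).const_mul _
    rw [intervalIntegral.integral_congr
      (g := fun y => μ*(1/4)*(v 1 y)^2 + μ*(1/4)*(v 0 y)^2
        - μ*(1/2) * ∫ x in (0:ℝ)..1, (v x y)^2)
      (fun y hy => inner3 y (hu ▸ hy)),
      intervalIntegral.integral_sub (i1.add i2) i3, intervalIntegral.integral_add i1 i2,
      intervalIntegral.integral_const_mul, intervalIntegral.integral_const_mul,
      intervalIntegral.integral_const_mul]
  have ER : (∫ y in (0:ℝ)..1, ∫ x in (0:ℝ)..1, (x - 1/2) * (vb x y * vm x y))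
      = (1/4) * (∫ y in (0:ℝ)..1, (vb 1 y)^2) + (1/4) * (∫ y in (0:ℝ)..1, (vb 0 y)^2)
        - (1/2) * ∫ y in (0:ℝ)..1, ∫ x in (0:ℝ)..1, (vb x y)^2 := by
    have h1m : (1:ℝ) ∈ Icc (0:ℝ) 1 := by norm_num
    have h0m : (0:ℝ) ∈ Icc (0:ℝ) 1 := by norm_num
    have i1 : IntervalIntegrable (fun y => (1/4:ℝ)*(vb 1 y)^2) volume 0 1 := by
      apply ContinuousOn.intervalIntegrable
      rw [hu]; exact continuousOn_const.mul ((slice_y vb hcvb h1m).pow 2)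
    have i2 : IntervalIntegrable (fun y => (1/4:ℝ)*(vb 0 y)^2) volume 0 1 := by
      apply ContinuousOn.intervalIntegrable
      rw [hu]; exact continuousOn_const.mul ((slice_y vb hcvb h0m).pow 2)
    have i3 : IntervalIntegrable (fun y => (1/2:ℝ) * ∫ x in (0:ℝ)..1, (vb x y)^2) volume 0 1 :=
      (marg_left (fun x y => (vb x y)^2) hcvb2).const_mul _
    rw [intervalIntegral.integral_congr
      (g := fun y => (1/4:ℝ)*(vb 1 y)^2 + (1/4:ℝ)*(vb 0 y)^2
        - (1/2:ℝ) * ∫ x in (0:ℝ)..1, (vb x y)^2)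
      (fun y hy => innerR y (hu ▸ hy)),
      intervalIntegral.integral_sub (i1.add i2) i3, intervalIntegral.integral_add i1 i2,
      intervalIntegral.integral_const_mul, intervalIntegral.integral_const_mul,
      intervalIntegral.integral_const_mul]
  have E4 : (∫ y in (0:ℝ)..1, ∫ x in (0:ℝ)..1, (y - 1/2) * (vb x y * vxx x y))
      = -(∫ y in (0:ℝ)..1, ∫ x in (0:ℝ)..1, (y - 1/2) * (vm x y * va x y)) := by
    rw [intervalIntegral.integral_congr
      (g := fun y => -(∫ x in (0:ℝ)..1, (y - 1/2) * (vm x y * va x y)))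
      (fun y hy => inner4 y (hu ▸ hy)), intervalIntegral.integral_neg]
  have ER' : (∫ x in (0:ℝ)..1, ∫ y in (0:ℝ)..1, (y - 1/2) * (vm x y * va x y))
      = (1/4) * (∫ x in (0:ℝ)..1, (va x 1)^2)
        - (1/2) * ∫ x in (0:ℝ)..1, ∫ y in (0:ℝ)..1, (va x y)^2 := by
    have h1m : (1:ℝ) ∈ Icc (0:ℝ) 1 := by norm_num
    have i1 : IntervalIntegrable (fun x => (1/4:ℝ)*(va x 1)^2) volume 0 1 := by
      apply ContinuousOn.intervalIntegrable
      rw [hu]; exact continuousOn_const.mul ((slice_x va hcva h1m).pow 2)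
    have i3 : IntervalIntegrable (fun x => (1/2:ℝ) * ∫ y in (0:ℝ)..1, (va x y)^2) volume 0 1 :=
      (marg_right (fun x y => (va x y)^2) hcva2).const_mul _
    rw [intervalIntegral.integral_congr
      (g := fun x => (1/4:ℝ)*(va x 1)^2 - (1/2:ℝ) * ∫ y in (0:ℝ)..1, (va x y)^2)
      (fun x hx => innerR' x (hu ▸ hx)),
      intervalIntegral.integral_sub i1 i3,
      intervalIntegral.integral_const_mul, intervalIntegral.integral_const_mul]
  have E5 : (∫ x in (0:ℝ)..1, ∫ y in (0:ℝ)..1, (y - 1/2) * (vb x y * vyy x y))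
      = (1/4) * (∫ x in (0:ℝ)..1, (vb x 0)^2)
        - (1/2) * ∫ x in (0:ℝ)..1, ∫ y in (0:ℝ)..1, (vb x y)^2 := by
    have h0m : (0:ℝ) ∈ Icc (0:ℝ) 1 := by norm_num
    have i1 : IntervalIntegrable (fun x => (1/4:ℝ)*(vb x 0)^2) volume 0 1 := by
      apply ContinuousOn.intervalIntegrable
      rw [hu]; exact continuousOn_const.mul ((slice_x vb hcvb h0m).pow 2)
    have i3 : IntervalIntegrable (fun x => (1/2:ℝ) * ∫ y in (0:ℝ)..1, (vb x y)^2) volume 0 1 :=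
      (marg_right (fun x y => (vb x y)^2) hcvb2).const_mul _
    rw [intervalIntegral.integral_congr
      (g := fun x => (1/4:ℝ)*(vb x 0)^2 - (1/2:ℝ) * ∫ y in (0:ℝ)..1, (vb x y)^2)
      (fun x hx => inner5 x (hu ▸ hx)),
      intervalIntegral.integral_sub i1 i3,
      intervalIntegral.integral_const_mul, intervalIntegral.integral_const_mul]
  have E6 : (∫ x in (0:ℝ)..1, ∫ y in (0:ℝ)..1, μ * ((y - 1/2) * (v x y * vb x y)))
      = μ*(1/4) * (∫ x in (0:ℝ)..1, (v x 1)^2)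
        - μ*(1/2) * ∫ x in (0:ℝ)..1, ∫ y in (0:ℝ)..1, (v x y)^2 := by
    have h1m : (1:ℝ) ∈ Icc (0:ℝ) 1 := by norm_num
    have i1 : IntervalIntegrable (fun x => μ*(1/4)*(v x 1)^2) volume 0 1 := by
      apply ContinuousOn.intervalIntegrable
      rw [hu]; exact continuousOn_const.mul ((slice_x v hcv h1m).pow 2)
    have i3 : IntervalIntegrable (fun x => μ*(1/2) * ∫ y in (0:ℝ)..1, (v x y)^2) volume 0 1 :=
      (marg_right (fun x y => (v x y)^2) hcv2).const_mul _
    rw [intervalIntegral.integral_congr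
      (g := fun x => μ*(1/4)*(v x 1)^2 - μ*(1/2) * ∫ y in (0:ℝ)..1, (v x y)^2)
      (fun x hx => inner6 x (hu ▸ hx)),
      intervalIntegral.integral_sub i1 i3,
      intervalIntegral.integral_const_mul, intervalIntegral.integral_const_mul]
  -- swaps
  have SW1 := (sq_int (fun x y => (x - 1/2) * (va x y * vxx x y)) hcP1).trans
    (sq_int_symm (fun x y => (x - 1/2) * (va x y * vxx x y)) hcP1).symm
  have SW3 := (sq_int (fun x y => μ * ((x - 1/2) * (v x y * va x y))) hcP3).trans
    (sq_int_symm (fun x y => μ * ((x - 1/2) * (v x y * va x y))) hcP3).symm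
  have SW4 := (sq_int (fun x y => (y - 1/2) * (vb x y * vxx x y)) hcP4).trans
    (sq_int_symm (fun x y => (y - 1/2) * (vb x y * vxx x y)) hcP4).symm
  have SWR := (sq_int (fun x y => (x - 1/2) * (vb x y * vm x y)) hcR).trans
    (sq_int_symm (fun x y => (x - 1/2) * (vb x y * vm x y)) hcR).symm
  have SWR' := (sq_int (fun x y => (y - 1/2) * (vm x y * va x y)) hcR').trans
    (sq_int_symm (fun x y => (y - 1/2) * (vm x y * va x y)) hcR').symm
  have SWva := (sq_int (fun x y => (va x y)^2) hcva2).trans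
    (sq_int_symm (fun x y => (va x y)^2) hcva2).symm
  have SWvb := (sq_int (fun x y => (vb x y)^2) hcvb2).trans
    (sq_int_symm (fun x y => (vb x y)^2) hcvb2).symm
  have SWv := (sq_int (fun x y => (v x y)^2) hcv2).trans
    (sq_int_symm (fun x y => (v x y)^2) hcv2).symm
  beta_reduce at SW1 SW3 SW4 SWR SWR' SWva SWvb SWv
  -- the vanishing double integral
  have hPt : ∀ x ∈ Icc (0:ℝ) 1, ∀ y ∈ Icc (0:ℝ) 1,
      (x - 1/2) * (va x y * vxx x y) + (x - 1/2) * (va x y * vyy x y)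
      + μ * ((x - 1/2) * (v x y * va x y)) + (y - 1/2) * (vb x y * vxx x y)
      + (y - 1/2) * (vb x y * vyy x y) + μ * ((y - 1/2) * (v x y * vb x y)) = 0 := by
    intro x hx y hy
    linear_combination ((x - 1/2) * va x y + (y - 1/2) * vb x y) * hPDE x hx y hy
  have Esum : (∫ x in (0:ℝ)..1, ∫ y in (0:ℝ)..1,
      ((x - 1/2) * (va x y * vxx x y) + (x - 1/2) * (va x y * vyy x y)
      + μ * ((x - 1/2) * (v x y * va x y)) + (y - 1/2) * (vb x y * vxx x y)
      + (y - 1/2) * (vb x y * vyy x y) + μ * ((y - 1/2) * (v x y * vb x y)))) = 0 := by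
    rw [intervalIntegral.integral_congr (g := fun _ => (0:ℝ)) (fun x hx => by
      rw [intervalIntegral.integral_congr (g := fun _ => (0:ℝ))
        (fun y hy => hPt x (hu ▸ hx) y (hu ▸ hy)), intervalIntegral.integral_zero])]
    exact intervalIntegral.integral_zero
  -- split the sum
  have hinSplit : ∀ x ∈ uIcc (0:ℝ) 1, (∫ y in (0:ℝ)..1,
      ((x - 1/2) * (va x y * vxx x y) + (x - 1/2) * (va x y * vyy x y)
      + μ * ((x - 1/2) * (v x y * va x y)) + (y - 1/2) * (vb x y * vxx x y)
      + (y - 1/2) * (vb x y * vyy x y) + μ * ((y - 1/2) * (v x y * vb x y))))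
      = (∫ y in (0:ℝ)..1, (x - 1/2) * (va x y * vxx x y))
      + (∫ y in (0:ℝ)..1, (x - 1/2) * (va x y * vyy x y))
      + (∫ y in (0:ℝ)..1, μ * ((x - 1/2) * (v x y * va x y)))
      + (∫ y in (0:ℝ)..1, (y - 1/2) * (vb x y * vxx x y))
      + (∫ y in (0:ℝ)..1, (y - 1/2) * (vb x y * vyy x y))
      + (∫ y in (0:ℝ)..1, μ * ((y - 1/2) * (v x y * vb x y))) := by
    intro x hx
    have hx' : x ∈ Icc (0:ℝ) 1 := hu ▸ hx
    have i1 : IntervalIntegrable (fun y => (x - 1/2) * (va x y * vxx x y)) volume 0 1 := by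
      apply ContinuousOn.intervalIntegrable
      rw [hu]; exact continuousOn_const.mul ((slice_y va hcva hx').mul (slice_y vxx hcvxx hx'))
    have i2 : IntervalIntegrable (fun y => (x - 1/2) * (va x y * vyy x y)) volume 0 1 := by
      apply ContinuousOn.intervalIntegrable
      rw [hu]; exact continuousOn_const.mul ((slice_y va hcva hx').mul (slice_y vyy hcvyy hx'))
    have i3 : IntervalIntegrable (fun y => μ * ((x - 1/2) * (v x y * va x y))) volume 0 1 := by
      apply ContinuousOn.intervalIntegrable
      rw [hu]
      exact continuousOn_const.mul (continuousOn_const.mul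
        ((slice_y v hcv hx').mul (slice_y va hcva hx')))
    have i4 : IntervalIntegrable (fun y => (y - 1/2) * (vb x y * vxx x y)) volume 0 1 := by
      apply ContinuousOn.intervalIntegrable
      rw [hu]
      exact (continuousOn_id.sub continuousOn_const).mul
        ((slice_y vb hcvb hx').mul (slice_y vxx hcvxx hx'))
    have i5 : IntervalIntegrable (fun y => (y - 1/2) * (vb x y * vyy x y)) volume 0 1 := by
      apply ContinuousOn.intervalIntegrable
      rw [hu]
      exact (continuousOn_id.sub continuousOn_const).mul
        ((slice_y vb hcvb hx').mul (slice_y vyy hcvyy hx'))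
    have i6 : IntervalIntegrable (fun y => μ * ((y - 1/2) * (v x y * vb x y))) volume 0 1 := by
      apply ContinuousOn.intervalIntegrable
      rw [hu]
      exact continuousOn_const.mul ((continuousOn_id.sub continuousOn_const).mul
        ((slice_y v hcv hx').mul (slice_y vb hcvb hx')))
    rw [intervalIntegral.integral_add ((((i1.add i2).add i3).add i4).add i5) i6,
      intervalIntegral.integral_add (((i1.add i2).add i3).add i4) i5,
      intervalIntegral.integral_add ((i1.add i2).add i3) i4,
      intervalIntegral.integral_add (i1.add i2) i3,
      intervalIntegral.integral_add i1 i2]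
  rw [intervalIntegral.integral_congr hinSplit] at Esum
  have m1 := marg_right (fun x y => (x - 1/2) * (va x y * vxx x y)) hcP1
  have m2 := marg_right (fun x y => (x - 1/2) * (va x y * vyy x y)) hcP2
  have m3 := marg_right (fun x y => μ * ((x - 1/2) * (v x y * va x y))) hcP3
  have m4 := marg_right (fun x y => (y - 1/2) * (vb x y * vxx x y)) hcP4
  have m5 := marg_right (fun x y => (y - 1/2) * (vb x y * vyy x y)) hcP5
  have m6 := marg_right (fun x y => μ * ((y - 1/2) * (v x y * vb x y))) hcP6
  beta_reduce at m1 m2 m3 m4 m5 m6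
  rw [intervalIntegral.integral_add ((((m1.add m2).add m3).add m4).add m5) m6,
    intervalIntegral.integral_add (((m1.add m2).add m3).add m4) m5,
    intervalIntegral.integral_add ((m1.add m2).add m3) m4,
    intervalIntegral.integral_add (m1.add m2) m3,
    intervalIntegral.integral_add m1 m2] at Esum
  -- assemble
  rw [SW1, E1, E2, SWR, ER, SW3, E3, SW4, E4, ← SWR', ER', E5, E6,
    ← SWva, ← SWvb, ← SWv, hnorm] at Esum
  linear_combination (2 : ℝ) * Esum


/-- Rellich–Christianson identity for the mixed Neumann–Dirichlet problem on
the unit square with Neumann faces `{0} × [0,1]`, `[0,1] × {1}`, `{1} × [0,1]` and Dirichlet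
face `[0,1] × {0}`, evaluated at the center `p = (1/2, 1/2)`. -/
theorem rellich_christianson_square_three_neumann
    (v : ℝ → ℝ → ℝ) (μ : ℝ) (U : Set (ℝ × ℝ)) (hU : IsOpen U)
    (hQU : Set.Icc ((0 : ℝ), (0 : ℝ)) (1, 1) ⊆ U)
    (hv : ContDiffOn ℝ 2 (fun p : ℝ × ℝ => v p.1 p.2) U)
    (heq : ∀ x ∈ Set.Icc (0 : ℝ) 1, ∀ y ∈ Set.Icc (0 : ℝ) 1,
      deriv (deriv (fun s : ℝ => v s y)) x + deriv (deriv (fun t : ℝ => v x t)) y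
        + μ * v x y = 0)
    (hneu0 : ∀ y ∈ Set.Icc (0 : ℝ) 1, deriv (fun s : ℝ => v s y) 0 = 0)
    (hneu1 : ∀ y ∈ Set.Icc (0 : ℝ) 1, deriv (fun s : ℝ => v s y) 1 = 0)
    (hneutop : ∀ x ∈ Set.Icc (0 : ℝ) 1, deriv (fun t : ℝ => v x t) 1 = 0)
    (hdir0 : ∀ x ∈ Set.Icc (0 : ℝ) 1, v x 0 = 0)
    (hnorm : (∫ x in (0 : ℝ)..1, ∫ y in (0 : ℝ)..1, (v x y) ^ 2) = 1) :
    μ * ((1 / 2) * (∫ y in (0 : ℝ)..1, (v 0 y) ^ 2)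
          + (1 / 2) * (∫ y in (0 : ℝ)..1, (v 1 y) ^ 2)
          + (1 / 2) * (∫ x in (0 : ℝ)..1, (v x 1) ^ 2) - 2)
      = (1 / 2) * (∫ y in (0 : ℝ)..1, (deriv (fun t : ℝ => v 0 t) y) ^ 2)
        + (1 / 2) * (∫ y in (0 : ℝ)..1, (deriv (fun t : ℝ => v 1 t) y) ^ 2)
        + (1 / 2) * (∫ x in (0 : ℝ)..1, (deriv (fun s : ℝ => v s 1) x) ^ 2)
        - (1 / 2) * (∫ x in (0 : ℝ)..1, (deriv (fun t : ℝ => v x t) 0) ^ 2) := by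
  have hQ : ∀ x ∈ Icc (0:ℝ) 1, ∀ y ∈ Icc (0:ℝ) 1, ((x, y) : ℝ × ℝ) ∈ U :=
    fun x hx y hy => hQU ⟨⟨hx.1, hy.1⟩, ⟨hx.2, hy.2⟩⟩
  have hu : uIcc (0:ℝ) 1 = Icc 0 1 := uIcc_of_le zero_le_one
  have h0m : (0:ℝ) ∈ Icc (0:ℝ) 1 := by norm_num
  have h1m : (1:ℝ) ∈ Icc (0:ℝ) 1 := by norm_num
  set F : ℝ × ℝ → ℝ := fun p => v p.1 p.2 with hF
  set Dv : ℝ × ℝ → (ℝ × ℝ →L[ℝ] ℝ) := fderiv ℝ F with hDv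
  set D2v : ℝ × ℝ → (ℝ × ℝ →L[ℝ] (ℝ × ℝ →L[ℝ] ℝ)) := fderiv ℝ Dv with hD2v
  set va : ℝ → ℝ → ℝ := fun x y => Dv (x, y) (1, 0) with hva
  set vb : ℝ → ℝ → ℝ := fun x y => Dv (x, y) (0, 1) with hvb
  set vxx : ℝ → ℝ → ℝ := fun x y => D2v (x, y) (1, 0) (1, 0) with hvxx
  set vyy : ℝ → ℝ → ℝ := fun x y => D2v (x, y) (0, 1) (0, 1) with hvyy
  set vm : ℝ → ℝ → ℝ := fun x y => D2v (x, y) (1, 0) (0, 1) with hvm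
  have h1 : ContDiffOn ℝ 1 Dv U := hv.fderiv_of_isOpen hU (by norm_num)
  have hc1 : ContinuousOn Dv U := h1.continuousOn
  have hc2 : ContinuousOn D2v U := (h1.fderiv_of_isOpen (m := 0) hU (by norm_num)).continuousOn
  have hdF : ∀ p ∈ U, HasFDerivAt F (Dv p) p := fun p hp =>
    ((hv.contDiffAt (hU.mem_nhds hp)).differentiableAt (by norm_num)).hasFDerivAt
  have hdDv : ∀ p ∈ U, HasFDerivAt Dv (D2v p) p := fun p hp =>
    ((h1.contDiffAt (hU.mem_nhds hp)).differentiableAt (by norm_num)).hasFDerivAt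
  have hsym : ∀ p ∈ U, D2v p (1, 0) (0, 1) = D2v p (0, 1) (1, 0) := fun p hp =>
    ((hv.contDiffAt (hU.mem_nhds hp)).isSymmSndFDerivAt (by norm_num)) (1, 0) (0, 1)
  -- pointwise derivative facts
  have hline1 : ∀ (x y : ℝ), HasDerivAt (fun s : ℝ => ((s, y) : ℝ × ℝ)) (1, 0) x :=
    fun x y => (hasDerivAt_id x).prodMk (hasDerivAt_const x y)
  have hline2 : ∀ (x y : ℝ), HasDerivAt (fun t : ℝ => ((x, t) : ℝ × ℝ)) (0, 1) y :=
    fun x y => (hasDerivAt_const y x).prodMk (hasDerivAt_id y)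
  have hdax : ∀ x y, ((x, y) : ℝ × ℝ) ∈ U → HasDerivAt (fun s => v s y) (va x y) x := by
    intro x y h
    exact (hdF (x, y) h).comp_hasDerivAt x (hline1 x y)
  have hdby : ∀ x y, ((x, y) : ℝ × ℝ) ∈ U → HasDerivAt (fun t => v x t) (vb x y) y := by
    intro x y h
    exact (hdF (x, y) h).comp_hasDerivAt y (hline2 x y)
  have hdax2 : ∀ x y, ((x, y) : ℝ × ℝ) ∈ U → HasDerivAt (fun s => va s y) (vxx x y) x := by
    intro x y h
    have h2 := (hdDv (x, y) h).comp_hasDerivAt x (hline1 x y)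
    have h3 := h2.clm_apply (hasDerivAt_const x ((1:ℝ), (0:ℝ)))
    simpa using h3
  have hdbx2 : ∀ x y, ((x, y) : ℝ × ℝ) ∈ U → HasDerivAt (fun s => vb s y) (vm x y) x := by
    intro x y h
    have h2 := (hdDv (x, y) h).comp_hasDerivAt x (hline1 x y)
    have h3 := h2.clm_apply (hasDerivAt_const x ((0:ℝ), (1:ℝ)))
    simpa using h3
  have hday2 : ∀ x y, ((x, y) : ℝ × ℝ) ∈ U → HasDerivAt (fun t => va x t) (vm x y) y := by
    intro x y h
    have h2 := (hdDv (x, y) h).comp_hasDerivAt y (hline2 x y)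
    have h3 := h2.clm_apply (hasDerivAt_const y ((1:ℝ), (0:ℝ)))
    have h5 : HasDerivAt (fun t => Dv (x, t) ((1:ℝ), (0:ℝ))) (D2v (x, y) (0, 1) (1, 0)) y := by
      simpa using h3
    rw [← hsym (x, y) h] at h5
    exact h5
  have hdby2 : ∀ x y, ((x, y) : ℝ × ℝ) ∈ U → HasDerivAt (fun t => vb x t) (vyy x y) y := by
    intro x y h
    have h2 := (hdDv (x, y) h).comp_hasDerivAt y (hline2 x y)
    have h3 := h2.clm_apply (hasDerivAt_const y ((0:ℝ), (1:ℝ)))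
    simpa using h3
  -- continuity
  have hcv : ContinuousOn (fun p : ℝ × ℝ => v p.1 p.2) (Icc ((0:ℝ),(0:ℝ)) (1,1)) :=
    hv.continuousOn.mono hQU
  have hcva : ContinuousOn (fun p : ℝ × ℝ => va p.1 p.2) (Icc ((0:ℝ),(0:ℝ)) (1,1)) := by
    have h2 : ContinuousOn (fun p : ℝ × ℝ => Dv p ((1:ℝ), (0:ℝ))) U :=
      (ContinuousLinearMap.apply ℝ ℝ ((1:ℝ), (0:ℝ))).continuous.comp_continuousOn hc1
    exact (h2.mono hQU)
  have hcvb : ContinuousOn (fun p : ℝ × ℝ => vb p.1 p.2) (Icc ((0:ℝ),(0:ℝ)) (1,1)) := by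
    have h2 : ContinuousOn (fun p : ℝ × ℝ => Dv p ((0:ℝ), (1:ℝ))) U :=
      (ContinuousLinearMap.apply ℝ ℝ ((0:ℝ), (1:ℝ))).continuous.comp_continuousOn hc1
    exact (h2.mono hQU)
  have hcvxx : ContinuousOn (fun p : ℝ × ℝ => vxx p.1 p.2) (Icc ((0:ℝ),(0:ℝ)) (1,1)) := by
    have h2 : ContinuousOn (fun p : ℝ × ℝ => D2v p ((1:ℝ), (0:ℝ)) ((1:ℝ), (0:ℝ))) U :=
      ((ContinuousLinearMap.apply ℝ ℝ ((1:ℝ), (0:ℝ))).continuous.comp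
        (ContinuousLinearMap.apply ℝ (ℝ × ℝ →L[ℝ] ℝ) ((1:ℝ), (0:ℝ))).continuous).comp_continuousOn hc2
    exact (h2.mono hQU)
  have hcvyy : ContinuousOn (fun p : ℝ × ℝ => vyy p.1 p.2) (Icc ((0:ℝ),(0:ℝ)) (1,1)) := by
    have h2 : ContinuousOn (fun p : ℝ × ℝ => D2v p ((0:ℝ), (1:ℝ)) ((0:ℝ), (1:ℝ))) U :=
      ((ContinuousLinearMap.apply ℝ ℝ ((0:ℝ), (1:ℝ))).continuous.comp
        (ContinuousLinearMap.apply ℝ (ℝ × ℝ →L[ℝ] ℝ) ((0:ℝ), (1:ℝ))).continuous).comp_continuousOn hc2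
    exact (h2.mono hQU)
  have hcvm : ContinuousOn (fun p : ℝ × ℝ => vm p.1 p.2) (Icc ((0:ℝ),(0:ℝ)) (1,1)) := by
    have h2 : ContinuousOn (fun p : ℝ × ℝ => D2v p ((1:ℝ), (0:ℝ)) ((0:ℝ), (1:ℝ))) U :=
      ((ContinuousLinearMap.apply ℝ ℝ ((0:ℝ), (1:ℝ))).continuous.comp
        (ContinuousLinearMap.apply ℝ (ℝ × ℝ →L[ℝ] ℝ) ((1:ℝ), (0:ℝ))).continuous).comp_continuousOn hc2
    exact (h2.mono hQU)
  -- PDE translation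
  have hvxx_eq : ∀ x y, ((x, y) : ℝ × ℝ) ∈ U → deriv (deriv (fun s : ℝ => v s y)) x = vxx x y := by
    intro x y h
    have hop : IsOpen {s : ℝ | ((s, y) : ℝ × ℝ) ∈ U} :=
      hU.preimage (continuous_id.prodMk continuous_const)
    have hev : deriv (fun s : ℝ => v s y) =ᶠ[nhds x] fun s => va s y := by
      filter_upwards [hop.mem_nhds h] with s hs
      exact (hdax s y hs).deriv
    rw [hev.deriv_eq]
    exact (hdax2 x y h).deriv
  have hvyy_eq : ∀ x y, ((x, y) : ℝ × ℝ) ∈ U → deriv (deriv (fun t : ℝ => v x t)) y = vyy x y := by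
    intro x y h
    have hop : IsOpen {t : ℝ | ((x, t) : ℝ × ℝ) ∈ U} :=
      hU.preimage (continuous_const.prodMk continuous_id)
    have hev : deriv (fun t : ℝ => v x t) =ᶠ[nhds y] fun t => vb x t := by
      filter_upwards [hop.mem_nhds h] with t ht
      exact (hdby x t ht).deriv
    rw [hev.deriv_eq]
    exact (hdby2 x y h).deriv
  have hPDE : ∀ x ∈ Icc (0:ℝ) 1, ∀ y ∈ Icc (0:ℝ) 1, vxx x y + vyy x y + μ * v x y = 0 := by
    intro x hx y hy
    rw [← hvxx_eq x y (hQ x hx y hy), ← hvyy_eq x y (hQ x hx y hy)]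
    exact heq x hx y hy
  -- boundary translations
  have hA0 : ∀ y ∈ Icc (0:ℝ) 1, va 0 y = 0 := by
    intro y hy
    rw [← (hdax 0 y (hQ 0 h0m y hy)).deriv]
    exact hneu0 y hy
  have hA1 : ∀ y ∈ Icc (0:ℝ) 1, va 1 y = 0 := by
    intro y hy
    rw [← (hdax 1 y (hQ 1 h1m y hy)).deriv]
    exact hneu1 y hy
  have hBtop : ∀ x ∈ Icc (0:ℝ) 1, vb x 1 = 0 := by
    intro x hx
    rw [← (hdby x 1 (hQ x hx 1 h1m)).deriv]
    exact hneutop x hx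
  have hAbot : ∀ x ∈ Icc (0:ℝ) 1, va x 0 = 0 := by
    have h0 : EqOn (fun x => va x 0) (fun _ => (0:ℝ)) (Ioo (0:ℝ) 1) := by
      intro x hx
      have hxU : ((x, (0:ℝ)) : ℝ × ℝ) ∈ U := hQ x (Ioo_subset_Icc_self hx) 0 h0m
      have hev : (fun s : ℝ => v s 0) =ᶠ[nhds x] (fun _ => (0:ℝ)) := by
        filter_upwards [isOpen_Ioo.mem_nhds hx] with s hs
        exact hdir0 s (Ioo_subset_Icc_self hs)
      have hd0 : HasDerivAt (fun s : ℝ => v s 0) 0 x :=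
        (hasDerivAt_const x (0:ℝ)).congr_of_eventuallyEq hev
      exact (hdax x 0 hxU).unique hd0
    have hcont : ContinuousOn (fun x => va x 0) (Icc 0 1) := slice_x va hcva h0m
    have hcl : EqOn (fun x => va x 0) (fun _ => (0:ℝ)) (Icc (0:ℝ) 1) :=
      h0.of_subset_closure hcont continuousOn_const Ioo_subset_Icc_self
        (by rw [closure_Ioo (zero_ne_one' ℝ)])
    intro x hx
    exact hcl hx
  -- goal conversion
  have g1 : (∫ y in (0:ℝ)..1, (deriv (fun t : ℝ => v 0 t) y) ^ 2)
      = ∫ y in (0:ℝ)..1, (vb 0 y) ^ 2 :=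
    intervalIntegral.integral_congr (fun y hy => by
      rw [(hdby 0 y (hQ 0 h0m y (hu ▸ hy))).deriv])
  have g2 : (∫ y in (0:ℝ)..1, (deriv (fun t : ℝ => v 1 t) y) ^ 2)
      = ∫ y in (0:ℝ)..1, (vb 1 y) ^ 2 :=
    intervalIntegral.integral_congr (fun y hy => by
      rw [(hdby 1 y (hQ 1 h1m y (hu ▸ hy))).deriv])
  have g3 : (∫ x in (0:ℝ)..1, (deriv (fun s : ℝ => v s 1) x) ^ 2)
      = ∫ x in (0:ℝ)..1, (va x 1) ^ 2 :=
    intervalIntegral.integral_congr (fun x hx => by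
      rw [(hdax x 1 (hQ x (hu ▸ hx) 1 h1m)).deriv])
  have g4 : (∫ x in (0:ℝ)..1, (deriv (fun t : ℝ => v x t) 0) ^ 2)
      = ∫ x in (0:ℝ)..1, (vb x 0) ^ 2 :=
    intervalIntegral.integral_congr (fun x hx => by
      rw [(hdby x 0 (hQ x (hu ▸ hx) 0 h0m)).deriv])
  rw [g1, g2, g3, g4]
  exact rellich_core v va vb vxx vyy vm μ hcv hcva hcvb hcvxx hcvyy hcvm
    (fun x hx y hy => hdax x y (hQ x hx y hy))
    (fun x hx y hy => hdby x y (hQ x hx y hy))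
    (fun x hx y hy => hdax2 x y (hQ x hx y hy))
    (fun x hx y hy => hdbx2 x y (hQ x hx y hy))
    (fun x hx y hy => hday2 x y (hQ x hx y hy))
    (fun x hx y hy => hdby2 x y (hQ x hx y hy))
    hPDE hA0 hA1 hAbot hBtop hdir0 hnorm
end

section
/- Let v be a real-valued function that is twice continuously differentiable on an open neighborhood of the closed unit square Q = [0,1]×[0,1], and let μ ∈ ℝ. Assume: (i) ∂²v/∂x² + ∂²v/∂y² + μv = 0 on Q; (ii) v = 0 on all four sides of the square, i.e. v(0,y) = v(1,y) = 0 for all y ∈ [0,1] and v(x,0) = v(x,1) = 0 for all x ∈ [0,1]; (iii) ∫_Q v² dxdy = 1. Then μ = (1/4)·( ∫₀¹ (∂v/∂x(0,y))² dy + ∫₀¹ (∂v/∂x(1,y))² dy + ∫₀¹ (∂v/∂y(x,0))² dx + ∫₀¹ (∂v/∂y(x,1))² dx ). -/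
open MeasureTheory intervalIntegral Set

namespace RellichAux

lemma hasPartial1 {g : ℝ × ℝ → ℝ} {U : Set (ℝ × ℝ)} (hU : IsOpen U)
    (hg : ContDiffOn ℝ 1 g U) {p : ℝ × ℝ} (hp : p ∈ U) :
    HasDerivAt (fun s => g (s, p.2)) (fderiv ℝ g p ((1:ℝ), (0:ℝ))) p.1 := by
  have hd : HasFDerivAt g (fderiv ℝ g p) p :=
    ((hg.contDiffAt (hU.mem_nhds hp)).differentiableAt one_ne_zero).hasFDerivAt
  have hc : HasDerivAt (fun s : ℝ => (s, p.2)) ((1:ℝ), (0:ℝ)) p.1 :=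
    (hasDerivAt_id p.1).prodMk (hasDerivAt_const p.1 p.2)
  exact hd.comp_hasDerivAt p.1 hc

lemma hasPartial2 {g : ℝ × ℝ → ℝ} {U : Set (ℝ × ℝ)} (hU : IsOpen U)
    (hg : ContDiffOn ℝ 1 g U) {p : ℝ × ℝ} (hp : p ∈ U) :
    HasDerivAt (fun t => g (p.1, t)) (fderiv ℝ g p ((0:ℝ), (1:ℝ))) p.2 := by
  have hd : HasFDerivAt g (fderiv ℝ g p) p :=
    ((hg.contDiffAt (hU.mem_nhds hp)).differentiableAt one_ne_zero).hasFDerivAt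
  have hc : HasDerivAt (fun t : ℝ => (p.1, t)) ((0:ℝ), (1:ℝ)) p.2 :=
    (hasDerivAt_const p.2 p.1).prodMk (hasDerivAt_id p.2)
  exact hd.comp_hasDerivAt p.2 hc

lemma contPartial {g : ℝ × ℝ → ℝ} {U : Set (ℝ × ℝ)} (hU : IsOpen U)
    (hg : ContDiffOn ℝ 1 g U) (w : ℝ × ℝ) :
    ContinuousOn (fun p => fderiv ℝ g p w) U :=
  (hg.continuousOn_fderiv_of_isOpen hU le_rfl).clm_apply continuousOn_const

lemma contDiffPartial {g : ℝ × ℝ → ℝ} {U : Set (ℝ × ℝ)} (hU : IsOpen U)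
    (hg : ContDiffOn ℝ 2 g U) (w : ℝ × ℝ) :
    ContDiffOn ℝ 1 (fun p => fderiv ℝ g p w) U :=
  (hg.fderiv_of_isOpen hU (by norm_num)).clm_apply contDiffOn_const

lemma symmPartial {g : ℝ × ℝ → ℝ} {U : Set (ℝ × ℝ)} (hU : IsOpen U)
    (hg : ContDiffOn ℝ 2 g U) {p : ℝ × ℝ} (hp : p ∈ U) :
    fderiv ℝ (fun q => fderiv ℝ g q ((1:ℝ), (0:ℝ))) p ((0:ℝ), (1:ℝ))
      = fderiv ℝ (fun q => fderiv ℝ g q ((0:ℝ), (1:ℝ))) p ((1:ℝ), (0:ℝ)) := by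
  have hsymm : IsSymmSndFDerivAt ℝ g p :=
    (hg.contDiffAt (hU.mem_nhds hp)).isSymmSndFDerivAt (by norm_num)
  have hG : ContDiffOn ℝ 1 (fderiv ℝ g) U := hg.fderiv_of_isOpen hU (by norm_num)
  have hGd : HasFDerivAt (fderiv ℝ g) (fderiv ℝ (fderiv ℝ g) p) p :=
    ((hG.contDiffAt (hU.mem_nhds hp)).differentiableAt one_ne_zero).hasFDerivAt
  have key : ∀ w : ℝ × ℝ, HasFDerivAt (fun q => fderiv ℝ g q w)
      ((fderiv ℝ (fderiv ℝ g) p).flip w) p := by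
    intro w
    have := hGd.clm_apply (hasFDerivAt_const w p)
    simpa using this
  rw [(key ((1:ℝ),(0:ℝ))).fderiv, (key ((0:ℝ),(1:ℝ))).fderiv]
  exact hsymm _ _

noncomputable def pm : Measure (ℝ × ℝ) :=
  (volume.restrict (Ioc (0:ℝ) 1)).prod (volume.restrict (Ioc (0:ℝ) 1))

lemma pm_eq : pm = (volume : Measure (ℝ × ℝ)).restrict (Ioc (0:ℝ) 1 ×ˢ Ioc (0:ℝ) 1) := by
  rw [pm, Measure.prod_restrict]; rfl

lemma integrable_pm {f : ℝ × ℝ → ℝ} {U : Set (ℝ × ℝ)} (hU : IsOpen U)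
    (hQU : Icc ((0:ℝ), (0:ℝ)) (1, 1) ⊆ U) (hf : ContinuousOn f U) : Integrable f pm := by
  rw [pm_eq]
  have h1 : IntegrableOn f (Icc ((0:ℝ), (0:ℝ)) (1, 1)) volume :=
    (hf.mono hQU).integrableOn_compact isCompact_Icc
  apply h1.mono_set
  rw [Icc_prod_eq]
  exact prod_mono Ioc_subset_Icc_self Ioc_subset_Icc_self

lemma conv1 {f : ℝ × ℝ → ℝ} (hf : Integrable f pm) :
    ∫ p, f p ∂pm = ∫ x in (0:ℝ)..1, ∫ y in (0:ℝ)..1, f (x, y) := by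
  rw [pm] at hf ⊢
  rw [integral_prod f hf]
  rw [intervalIntegral.integral_of_le (by norm_num : (0:ℝ) ≤ 1)]
  simp_rw [intervalIntegral.integral_of_le (by norm_num : (0:ℝ) ≤ 1)]

lemma conv2 {f : ℝ × ℝ → ℝ} (hf : Integrable f pm) :
    ∫ p, f p ∂pm = ∫ y in (0:ℝ)..1, ∫ x in (0:ℝ)..1, f (x, y) := by
  rw [pm] at hf ⊢
  rw [integral_prod_symm f hf]
  rw [intervalIntegral.integral_of_le (by norm_num : (0:ℝ) ≤ 1)]
  simp_rw [intervalIntegral.integral_of_le (by norm_num : (0:ℝ) ≤ 1)]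

lemma margin {f : ℝ × ℝ → ℝ} (hf : Integrable f pm) :
    IntervalIntegrable (fun y => ∫ x in (0:ℝ)..1, f (x, y)) volume 0 1 := by
  rw [pm] at hf
  have h := hf.integral_prod_right
  rw [intervalIntegrable_iff, uIoc_of_le (by norm_num : (0:ℝ) ≤ 1)]
  simp_rw [intervalIntegral.integral_of_le (by norm_num : (0:ℝ) ≤ 1)]
  exact h

lemma pm_swap {f : ℝ × ℝ → ℝ} : ∫ p, f p.swap ∂pm = ∫ p, f p ∂pm := by
  rw [pm]; exact integral_prod_swap f

lemma sq_swap_subset {U : Set (ℝ × ℝ)} (hQU : Icc ((0:ℝ), (0:ℝ)) (1, 1) ⊆ U) :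
    Icc ((0:ℝ), (0:ℝ)) (1, 1) ⊆ Prod.swap ⁻¹' U := by
  intro p hp
  rw [Icc_prod_eq] at hp
  exact Set.mem_preimage.mpr (hQU (by rw [Icc_prod_eq]; exact ⟨hp.2, hp.1⟩))

lemma dcongr {f g : ℝ → ℝ → ℝ} (h : ∀ x ∈ Icc (0:ℝ) 1, ∀ y ∈ Icc (0:ℝ) 1, f x y = g x y) :
    ∫ x in (0:ℝ)..1, ∫ y in (0:ℝ)..1, f x y = ∫ x in (0:ℝ)..1, ∫ y in (0:ℝ)..1, g x y := by
  apply intervalIntegral.integral_congr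
  intro x hx
  rw [Set.uIcc_of_le (by norm_num : (0:ℝ) ≤ 1)] at hx
  apply intervalIntegral.integral_congr
  intro y hy
  rw [Set.uIcc_of_le (by norm_num : (0:ℝ) ≤ 1)] at hy
  exact h x hx y hy

lemma integral_congr_Ioo {f g : ℝ → ℝ} (h : ∀ x ∈ Ioo (0:ℝ) 1, f x = g x) :
    ∫ x in (0:ℝ)..1, f x = ∫ x in (0:ℝ)..1, g x := by
  apply intervalIntegral.integral_congr_ae
  have h1 : ∀ᵐ (x : ℝ), x ≠ 1 := by
    refine ae_iff.mpr ?_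
    simp only [ne_eq, not_not, setOf_eq_eq_singleton]
    exact Real.volume_singleton
  filter_upwards [h1] with x hx hmem
  rw [uIoc_of_le (by norm_num : (0:ℝ) ≤ 1)] at hmem
  exact h x ⟨hmem.1, lt_of_le_of_ne hmem.2 hx⟩

lemma swap_double {g : ℝ × ℝ → ℝ} {U : Set (ℝ × ℝ)} (hU : IsOpen U)
    (hQU : Icc ((0:ℝ), (0:ℝ)) (1, 1) ⊆ U) (hg : ContinuousOn g U) :
    (∫ x in (0:ℝ)..1, ∫ y in (0:ℝ)..1, g (y, x)) = ∫ x in (0:ℝ)..1, ∫ y in (0:ℝ)..1, g (x, y) := by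
  have hU' : IsOpen (Prod.swap ⁻¹' U) := hU.preimage continuous_swap
  have h1 : Integrable (fun p : ℝ × ℝ => g (p.2, p.1)) pm :=
    integrable_pm hU' (sq_swap_subset hQU)
      (hg.comp continuous_swap.continuousOn (fun p hp => hp))
  rw [← conv1 h1, ← conv1 (integrable_pm hU hQU hg)]
  exact pm_swap
set_option maxHeartbeats 1000000 in
lemma aux
    (v : ℝ → ℝ → ℝ) (μ : ℝ) (U : Set (ℝ × ℝ)) (hU : IsOpen U)
    (hQU : Set.Icc ((0 : ℝ), (0 : ℝ)) (1, 1) ⊆ U)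
    (hv : ContDiffOn ℝ 2 (fun p : ℝ × ℝ => v p.1 p.2) U)
    (heq : ∀ x ∈ Set.Icc (0 : ℝ) 1, ∀ y ∈ Set.Icc (0 : ℝ) 1,
      deriv (deriv (fun s : ℝ => v s y)) x + deriv (deriv (fun t : ℝ => v x t)) y
        + μ * v x y = 0)
    (hdirL : ∀ y ∈ Set.Icc (0 : ℝ) 1, v 0 y = 0)
    (hdirR : ∀ y ∈ Set.Icc (0 : ℝ) 1, v 1 y = 0)
    (hdirB : ∀ x ∈ Set.Icc (0 : ℝ) 1, v x 0 = 0)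
    (hdirT : ∀ x ∈ Set.Icc (0 : ℝ) 1, v x 1 = 0) :
    (∫ y in (0:ℝ)..1, (deriv (fun s : ℝ => v s y) 0) ^ 2)
      + (∫ y in (0:ℝ)..1, (deriv (fun s : ℝ => v s y) 1) ^ 2)
    = 2 * (∫ x in (0:ℝ)..1, ∫ y in (0:ℝ)..1, (deriv (fun s : ℝ => v s y) x) ^ 2)
      - 2 * (∫ x in (0:ℝ)..1, ∫ y in (0:ℝ)..1, (deriv (fun t : ℝ => v x t) y) ^ 2)
      + 2 * μ * (∫ x in (0:ℝ)..1, ∫ y in (0:ℝ)..1, (v x y) ^ 2) := by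
  have h01 : (0:ℝ) ≤ 1 := by norm_num
  set F : ℝ × ℝ → ℝ := fun p => v p.1 p.2 with hF
  set Vx : ℝ × ℝ → ℝ := fun p => fderiv ℝ F p ((1:ℝ), (0:ℝ)) with hVxdef
  set Vy : ℝ × ℝ → ℝ := fun p => fderiv ℝ F p ((0:ℝ), (1:ℝ)) with hVydef
  set Vxx : ℝ × ℝ → ℝ := fun p => fderiv ℝ Vx p ((1:ℝ), (0:ℝ)) with hVxxdef
  set Vxy : ℝ × ℝ → ℝ := fun p => fderiv ℝ Vx p ((0:ℝ), (1:ℝ)) with hVxydef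
  set Vyx : ℝ × ℝ → ℝ := fun p => fderiv ℝ Vy p ((1:ℝ), (0:ℝ)) with hVyxdef
  set Vyy : ℝ × ℝ → ℝ := fun p => fderiv ℝ Vy p ((0:ℝ), (1:ℝ)) with hVyydef
  have hv1 : ContDiffOn ℝ 1 F U := hv.of_le one_le_two
  have hVx1 : ContDiffOn ℝ 1 Vx U := contDiffPartial hU hv _
  have hVy1 : ContDiffOn ℝ 1 Vy U := contDiffPartial hU hv _
  have sqU : ∀ x ∈ Icc (0:ℝ) 1, ∀ y ∈ Icc (0:ℝ) 1, (x, y) ∈ U := by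
    intro x hx y hy
    apply hQU
    rw [Set.Icc_prod_eq]
    exact Set.mem_prod.mpr ⟨hx, hy⟩
  -- partial derivative facts
  have hdVx : ∀ p ∈ U, HasDerivAt (fun s => v s p.2) (Vx p) p.1 :=
    fun p hp => hasPartial1 hU hv1 hp
  have hdVy : ∀ p ∈ U, HasDerivAt (fun t => v p.1 t) (Vy p) p.2 :=
    fun p hp => hasPartial2 hU hv1 hp
  have hdVxx : ∀ p ∈ U, HasDerivAt (fun s => Vx (s, p.2)) (Vxx p) p.1 :=
    fun p hp => hasPartial1 hU hVx1 hp
  have hdVxy : ∀ p ∈ U, HasDerivAt (fun t => Vx (p.1, t)) (Vxy p) p.2 :=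
    fun p hp => hasPartial2 hU hVx1 hp
  have hdVyx : ∀ p ∈ U, HasDerivAt (fun s => Vy (s, p.2)) (Vyx p) p.1 :=
    fun p hp => hasPartial1 hU hVy1 hp
  have hdVyy : ∀ p ∈ U, HasDerivAt (fun t => Vy (p.1, t)) (Vyy p) p.2 :=
    fun p hp => hasPartial2 hU hVy1 hp
  have hsymm : ∀ p ∈ U, Vxy p = Vyx p := fun p hp => symmPartial hU hv hp
  -- continuity
  have cF : ContinuousOn F U := hv.continuousOn
  have cVx : ContinuousOn Vx U := contPartial hU hv1 _
  have cVy : ContinuousOn Vy U := contPartial hU hv1 _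
  have cVxx : ContinuousOn Vxx U := contPartial hU hVx1 _
  have cVxy : ContinuousOn Vxy U := contPartial hU hVx1 _
  have cVyx : ContinuousOn Vyx U := contPartial hU hVy1 _
  have cVyy : ContinuousOn Vyy U := contPartial hU hVy1 _
  -- continuity of slices
  have sliceX : ∀ (g : ℝ × ℝ → ℝ), ContinuousOn g U → ∀ y ∈ Icc (0:ℝ) 1,
      ContinuousOn (fun x => g (x, y)) (uIcc (0:ℝ) 1) := by
    intro g hg y hy
    rw [Set.uIcc_of_le h01]
    exact hg.comp (by fun_prop) (fun x hx => sqU x hx y hy)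
  have sliceY : ∀ (g : ℝ × ℝ → ℝ), ContinuousOn g U → ∀ x ∈ Icc (0:ℝ) 1,
      ContinuousOn (fun y => g (x, y)) (uIcc (0:ℝ) 1) := by
    intro g hg x hx
    rw [Set.uIcc_of_le h01]
    exact hg.comp (by fun_prop) (fun y hy => sqU x hx y hy)
  -- PDE in terms of Vxx, Vyy
  have hPDE : ∀ x ∈ Icc (0:ℝ) 1, ∀ y ∈ Icc (0:ℝ) 1,
      Vxx (x, y) + Vyy (x, y) + μ * v x y = 0 := by
    intro x hx y hy
    have h1 : deriv (deriv (fun s : ℝ => v s y)) x = Vxx (x, y) := by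
      have hev : deriv (fun s : ℝ => v s y) =ᶠ[nhds x] (fun s => Vx (s, y)) := by
        have hUo : IsOpen {s : ℝ | (s, y) ∈ U} := hU.preimage (by fun_prop)
        filter_upwards [hUo.mem_nhds (sqU x hx y hy)] with s hs
        exact (hdVx (s, y) hs).deriv
      rw [hev.deriv_eq]
      exact (hdVxx (x, y) (sqU x hx y hy)).deriv
    have h2 : deriv (deriv (fun t : ℝ => v x t)) y = Vyy (x, y) := by
      have hev : deriv (fun t : ℝ => v x t) =ᶠ[nhds y] (fun t => Vy (x, t)) := by
        have hUo : IsOpen {t : ℝ | (x, t) ∈ U} := hU.preimage (by fun_prop)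
        filter_upwards [hUo.mem_nhds (sqU x hx y hy)] with t ht
        exact (hdVy (x, t) ht).deriv
      rw [hev.deriv_eq]
      exact (hdVyy (x, y) (sqU x hx y hy)).deriv
    have h3 := heq x hx y hy
    rw [h1, h2] at h3
    exact h3
  -- boundary vanishing of tangential derivatives
  have hVxB : ∀ x ∈ Ioo (0:ℝ) 1, Vx (x, 0) = 0 := by
    intro x hx
    have h0 : (fun s : ℝ => v s 0) =ᶠ[nhds x] (fun _ => (0:ℝ)) := by
      filter_upwards [isOpen_Ioo.mem_nhds hx] with s hs
      exact hdirB s (Ioo_subset_Icc_self hs)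
    have h1 := (hdVx (x, 0) (sqU x (Ioo_subset_Icc_self hx) 0 (by norm_num))).deriv
    rw [← h1, h0.deriv_eq, deriv_const]
  have hVxT : ∀ x ∈ Ioo (0:ℝ) 1, Vx (x, 1) = 0 := by
    intro x hx
    have h0 : (fun s : ℝ => v s 1) =ᶠ[nhds x] (fun _ => (0:ℝ)) := by
      filter_upwards [isOpen_Ioo.mem_nhds hx] with s hs
      exact hdirT s (Ioo_subset_Icc_self hs)
    have h1 := (hdVx (x, 1) (sqU x (Ioo_subset_Icc_self hx) 1 (by norm_num))).deriv
    rw [← h1, h0.deriv_eq, deriv_const]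
  have hVyL : ∀ y ∈ Ioo (0:ℝ) 1, Vy (0, y) = 0 := by
    intro y hy
    have h0 : (fun t : ℝ => v 0 t) =ᶠ[nhds y] (fun _ => (0:ℝ)) := by
      filter_upwards [isOpen_Ioo.mem_nhds hy] with t ht
      exact hdirL t (Ioo_subset_Icc_self ht)
    have h1 := (hdVy (0, y) (sqU 0 (by norm_num) y (Ioo_subset_Icc_self hy))).deriv
    rw [← h1, h0.deriv_eq, deriv_const]
  have hVyR : ∀ y ∈ Ioo (0:ℝ) 1, Vy (1, y) = 0 := by
    intro y hy
    have h0 : (fun t : ℝ => v 1 t) =ᶠ[nhds y] (fun _ => (0:ℝ)) := by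
      filter_upwards [isOpen_Ioo.mem_nhds hy] with t ht
      exact hdirR t (Ioo_subset_Icc_self ht)
    have h1 := (hdVy (1, y) (sqU 1 (by norm_num) y (Ioo_subset_Icc_self hy))).deriv
    rw [← h1, h0.deriv_eq, deriv_const]
  -- integrability
  have cSub : ContinuousOn (fun p : ℝ × ℝ => p.1 - 1/2) U :=
    (by fun_prop : Continuous fun p : ℝ × ℝ => p.1 - 1/2).continuousOn
  have iVx2 : Integrable (fun p => Vx p ^ 2) pm := integrable_pm hU hQU (cVx.pow 2)
  have iVy2 : Integrable (fun p => Vy p ^ 2) pm := integrable_pm hU hQU (cVy.pow 2)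
  have iF2 : Integrable (fun p => F p ^ 2) pm := integrable_pm hU hQU (cF.pow 2)
  have iJ1 : Integrable (fun p => (p.1 - 1/2) * (Vx p * Vxx p)) pm :=
    integrable_pm hU hQU (cSub.mul (cVx.mul cVxx))
  have iJ2 : Integrable (fun p => (p.1 - 1/2) * (Vx p * Vyy p)) pm :=
    integrable_pm hU hQU (cSub.mul (cVx.mul cVyy))
  have iJ3 : Integrable (fun p => (p.1 - 1/2) * (Vx p * (μ * F p))) pm :=
    integrable_pm hU hQU (cSub.mul (cVx.mul (continuousOn_const.mul cF)))
  have iK : Integrable (fun p => (p.1 - 1/2) * (Vxy p * Vy p)) pm :=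
    integrable_pm hU hQU (cSub.mul (cVxy.mul cVy))
  -- generic integration by parts for (x-1/2) * (2 g g')
  have ibp : ∀ (g g' : ℝ → ℝ), (∀ x ∈ Icc (0:ℝ) 1, HasDerivAt g (g' x) x) →
      ContinuousOn g' (uIcc (0:ℝ) 1) →
      (∫ x in (0:ℝ)..1, (x - 1/2) * (2 * (g x * g' x))) =
        1/2 * g 1 ^ 2 + 1/2 * g 0 ^ 2 - ∫ x in (0:ℝ)..1, g x ^ 2 := by
    intro g g' hg hg'
    have hu : ∀ x ∈ uIcc (0:ℝ) 1, HasDerivAt (fun x : ℝ => x - 1/2) ((fun _ : ℝ => (1:ℝ)) x) x :=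
      fun x _ => (hasDerivAt_id x).sub_const _
    have hw : ∀ x ∈ uIcc (0:ℝ) 1,
        HasDerivAt (fun x => g x ^ 2) ((fun x => 2 * (g x * g' x)) x) x := by
      intro x hx
      rw [Set.uIcc_of_le h01] at hx
      have h := (hg x hx).fun_pow 2
      refine h.congr_deriv ?_
      push_cast
      ring
    have hu' : IntervalIntegrable (fun _ : ℝ => (1:ℝ)) volume 0 1 := intervalIntegrable_const
    have hgc : ContinuousOn g (uIcc (0:ℝ) 1) := by
      intro x hx
      have hx' := hx
      rw [Set.uIcc_of_le h01] at hx'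
      exact (hg x hx').continuousAt.continuousWithinAt
    have hw' : IntervalIntegrable (fun x => 2 * (g x * g' x)) volume 0 1 :=
      (continuousOn_const.mul (hgc.mul hg')).intervalIntegrable
    have h := intervalIntegral.integral_mul_deriv_eq_deriv_mul hu hw hu' hw'
    rw [h]
    have h1 : (∫ x in (0:ℝ)..1, (fun _ : ℝ => (1:ℝ)) x * g x ^ 2) = ∫ x in (0:ℝ)..1, g x ^ 2 := by
      simp
    rw [h1]
    norm_num
  -- the three integrals sum to zero
  have hsum : (∫ p, (p.1 - 1/2) * (Vx p * Vxx p) ∂pm)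
      + (∫ p, (p.1 - 1/2) * (Vx p * Vyy p) ∂pm)
      + (∫ p, (p.1 - 1/2) * (Vx p * (μ * F p)) ∂pm) = 0 := by
    have iJ12 : Integrable (fun p => (p.1 - 1/2) * (Vx p * Vxx p)
        + (p.1 - 1/2) * (Vx p * Vyy p)) pm := iJ1.add iJ2
    rw [← integral_add iJ1 iJ2, ← integral_add iJ12 iJ3, pm_eq]
    rw [setIntegral_congr_fun (measurableSet_Ioc.prod measurableSet_Ioc)
      (g := fun _ => (0:ℝ)) ?_]
    · simp
    · rintro ⟨x, y⟩ hp
      have h := hPDE x (Ioc_subset_Icc_self hp.1) y (Ioc_subset_Icc_self hp.2)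
      show (x - 1/2) * (Vx (x, y) * Vxx (x, y)) + (x - 1/2) * (Vx (x, y) * Vyy (x, y))
        + (x - 1/2) * (Vx (x, y) * (μ * v x y)) = 0
      linear_combination (x - 1/2) * Vx (x, y) * h
  -- J1 computation
  have hJ1conv : (∫ p, (p.1 - 1/2) * (Vx p * Vxx p) ∂pm)
      = ∫ y in (0:ℝ)..1, ∫ x in (0:ℝ)..1, (x - 1/2) * (Vx (x, y) * Vxx (x, y)) := conv2 (f := fun p => (p.1 - 1/2) * (Vx p * Vxx p)) iJ1
  have hmargVx : IntervalIntegrable (fun y => ∫ x in (0:ℝ)..1, Vx (x, y) ^ 2) volume 0 1 :=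
    margin (f := fun p => Vx p ^ 2) iVx2
  have hJ1 : (∫ p, (p.1 - 1/2) * (Vx p * Vxx p) ∂pm)
      = 1/4 * (∫ y in (0:ℝ)..1, Vx (1, y) ^ 2) + 1/4 * (∫ y in (0:ℝ)..1, Vx (0, y) ^ 2)
        - 1/2 * ∫ p, Vx p ^ 2 ∂pm := by
    rw [hJ1conv]
    have inner : ∀ y ∈ Icc (0:ℝ) 1,
        (∫ x in (0:ℝ)..1, (x - 1/2) * (Vx (x, y) * Vxx (x, y)))
          = 1/4 * Vx (1, y) ^ 2 + 1/4 * Vx (0, y) ^ 2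
            - 1/2 * ∫ x in (0:ℝ)..1, Vx (x, y) ^ 2 := by
      intro y hy
      have hg : ∀ x ∈ Icc (0:ℝ) 1, HasDerivAt (fun x => Vx (x, y)) (Vxx (x, y)) x :=
        fun x hx => hdVxx (x, y) (sqU x hx y hy)
      have hibp := ibp (fun x => Vx (x, y)) (fun x => Vxx (x, y)) hg (sliceX Vxx cVxx y hy)
      have hhalf : (∫ x in (0:ℝ)..1, (x - 1/2) * (Vx (x, y) * Vxx (x, y)))
          = 1/2 * ∫ x in (0:ℝ)..1, (x - 1/2) * (2 * (Vx (x, y) * Vxx (x, y))) := by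
        rw [← intervalIntegral.integral_const_mul]
        apply intervalIntegral.integral_congr
        intro x _
        ring
      rw [hhalf, hibp]
      ring
    have hcongr : (∫ y in (0:ℝ)..1, ∫ x in (0:ℝ)..1, (x - 1/2) * (Vx (x, y) * Vxx (x, y)))
        = ∫ y in (0:ℝ)..1, (1/4 * Vx (1, y) ^ 2 + 1/4 * Vx (0, y) ^ 2
            - 1/2 * ∫ x in (0:ℝ)..1, Vx (x, y) ^ 2) :=
      intervalIntegral.integral_congr
        (fun y hy => inner y (by rwa [Set.uIcc_of_le h01] at hy))
    rw [hcongr]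
    have i1 : IntervalIntegrable (fun y => 1/4 * Vx (1, y) ^ 2) volume 0 1 :=
      (continuousOn_const.mul ((sliceY Vx cVx 1 (by norm_num)).pow 2)).intervalIntegrable
    have i2 : IntervalIntegrable (fun y => 1/4 * Vx (0, y) ^ 2) volume 0 1 :=
      (continuousOn_const.mul ((sliceY Vx cVx 0 (by norm_num)).pow 2)).intervalIntegrable
    have im : IntervalIntegrable (fun y => 1/2 * ∫ x in (0:ℝ)..1, Vx (x, y) ^ 2) volume 0 1 :=
      hmargVx.const_mul _
    rw [intervalIntegral.integral_sub (i1.add i2) im, intervalIntegral.integral_add i1 i2,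
      intervalIntegral.integral_const_mul, intervalIntegral.integral_const_mul,
      intervalIntegral.integral_const_mul]
    have hPconv : (∫ p, Vx p ^ 2 ∂pm)
        = ∫ y in (0:ℝ)..1, ∫ x in (0:ℝ)..1, Vx (x, y) ^ 2 := conv2 (f := fun p => Vx p ^ 2) iVx2
    rw [hPconv]
  -- J3 computation
  have hJ3conv : (∫ p, (p.1 - 1/2) * (Vx p * (μ * F p)) ∂pm)
      = ∫ y in (0:ℝ)..1, ∫ x in (0:ℝ)..1, (x - 1/2) * (Vx (x, y) * (μ * v x y)) := conv2 (f := fun p => (p.1 - 1/2) * (Vx p * (μ * F p))) iJ3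
  have hJ3 : (∫ p, (p.1 - 1/2) * (Vx p * (μ * F p)) ∂pm)
      = -(μ/2) * ∫ p, F p ^ 2 ∂pm := by
    rw [hJ3conv]
    have inner : ∀ y ∈ Icc (0:ℝ) 1,
        (∫ x in (0:ℝ)..1, (x - 1/2) * (Vx (x, y) * (μ * v x y)))
          = -(μ/2) * ∫ x in (0:ℝ)..1, v x y ^ 2 := by
      intro y hy
      have hg : ∀ x ∈ Icc (0:ℝ) 1, HasDerivAt (fun x => v x y) (Vx (x, y)) x :=
        fun x hx => hdVx (x, y) (sqU x hx y hy)
      have hibp0 := ibp (fun x => v x y) (fun x => Vx (x, y)) hg (sliceX Vx cVx y hy)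
      have hibp : (∫ x in (0:ℝ)..1, (x - 1/2) * (2 * (v x y * Vx (x, y))))
          = 1/2 * v 1 y ^ 2 + 1/2 * v 0 y ^ 2 - ∫ x in (0:ℝ)..1, v x y ^ 2 := hibp0
      rw [hdirR y hy, hdirL y hy] at hibp
      have hhalf : (∫ x in (0:ℝ)..1, (x - 1/2) * (Vx (x, y) * (μ * v x y)))
          = μ/2 * ∫ x in (0:ℝ)..1, (x - 1/2) * (2 * (v x y * Vx (x, y))) := by
        rw [← intervalIntegral.integral_const_mul]
        apply intervalIntegral.integral_congr
        intro x _
        ring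
      rw [hhalf, hibp]
      ring
    have hcongr : (∫ y in (0:ℝ)..1, ∫ x in (0:ℝ)..1, (x - 1/2) * (Vx (x, y) * (μ * v x y)))
        = ∫ y in (0:ℝ)..1, (-(μ/2) * ∫ x in (0:ℝ)..1, v x y ^ 2) :=
      intervalIntegral.integral_congr
        (fun y hy => inner y (by rwa [Set.uIcc_of_le h01] at hy))
    rw [hcongr, intervalIntegral.integral_const_mul]
    have hNconv : (∫ p, F p ^ 2 ∂pm)
        = ∫ y in (0:ℝ)..1, ∫ x in (0:ℝ)..1, v x y ^ 2 := conv2 (f := fun p => F p ^ 2) iF2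
    rw [hNconv]
  -- J2 computation
  have hJ2conv : (∫ p, (p.1 - 1/2) * (Vx p * Vyy p) ∂pm)
      = ∫ x in (0:ℝ)..1, ∫ y in (0:ℝ)..1, (x - 1/2) * (Vx (x, y) * Vyy (x, y)) := conv1 (f := fun p => (p.1 - 1/2) * (Vx p * Vyy p)) iJ2
  have hKconv1 : (∫ p, (p.1 - 1/2) * (Vxy p * Vy p) ∂pm)
      = ∫ x in (0:ℝ)..1, ∫ y in (0:ℝ)..1, (x - 1/2) * (Vxy (x, y) * Vy (x, y)) := conv1 (f := fun p => (p.1 - 1/2) * (Vxy p * Vy p)) iK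
  have hKconv2 : (∫ p, (p.1 - 1/2) * (Vxy p * Vy p) ∂pm)
      = ∫ y in (0:ℝ)..1, ∫ x in (0:ℝ)..1, (x - 1/2) * (Vxy (x, y) * Vy (x, y)) := conv2 (f := fun p => (p.1 - 1/2) * (Vxy p * Vy p)) iK
  have hJ2 : (∫ p, (p.1 - 1/2) * (Vx p * Vyy p) ∂pm)
      = 1/2 * ∫ p, Vy p ^ 2 ∂pm := by
    have innerA : ∀ x ∈ Ioo (0:ℝ) 1,
        (∫ y in (0:ℝ)..1, (x - 1/2) * (Vx (x, y) * Vyy (x, y)))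
          = -((x - 1/2) * ∫ y in (0:ℝ)..1, Vxy (x, y) * Vy (x, y)) := by
      intro x hx
      have hxI := Ioo_subset_Icc_self hx
      have hu : ∀ y ∈ uIcc (0:ℝ) 1,
          HasDerivAt (fun y => Vx (x, y)) ((fun y => Vxy (x, y)) y) y := by
        intro y hy
        rw [Set.uIcc_of_le h01] at hy
        exact hdVxy (x, y) (sqU x hxI y hy)
      have hw : ∀ y ∈ uIcc (0:ℝ) 1,
          HasDerivAt (fun y => Vy (x, y)) ((fun y => Vyy (x, y)) y) y := by
        intro y hy
        rw [Set.uIcc_of_le h01] at hy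
        exact hdVyy (x, y) (sqU x hxI y hy)
      have hu' : IntervalIntegrable (fun y => Vxy (x, y)) volume 0 1 :=
        (sliceY Vxy cVxy x hxI).intervalIntegrable
      have hw' : IntervalIntegrable (fun y => Vyy (x, y)) volume 0 1 :=
        (sliceY Vyy cVyy x hxI).intervalIntegrable
      have h := intervalIntegral.integral_mul_deriv_eq_deriv_mul hu hw hu' hw'
      rw [intervalIntegral.integral_const_mul, h, hVxT x hx, hVxB x hx]
      ring
    have hA : (∫ x in (0:ℝ)..1, ∫ y in (0:ℝ)..1, (x - 1/2) * (Vx (x, y) * Vyy (x, y)))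
        = -(∫ x in (0:ℝ)..1, (x - 1/2) * ∫ y in (0:ℝ)..1, Vxy (x, y) * Vy (x, y)) :=
      (integral_congr_Ioo (fun x hx => innerA x hx)).trans intervalIntegral.integral_neg
    have hpush : (∫ x in (0:ℝ)..1, (x - 1/2) * ∫ y in (0:ℝ)..1, Vxy (x, y) * Vy (x, y))
        = ∫ x in (0:ℝ)..1, ∫ y in (0:ℝ)..1, (x - 1/2) * (Vxy (x, y) * Vy (x, y)) :=
      intervalIntegral.integral_congr
        (fun x _ => (intervalIntegral.integral_const_mul _ _).symm)
    -- step B : the K integral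
    have innerB : ∀ y ∈ Ioo (0:ℝ) 1,
        (∫ x in (0:ℝ)..1, (x - 1/2) * (Vxy (x, y) * Vy (x, y)))
          = -(1/2) * ∫ x in (0:ℝ)..1, Vy (x, y) ^ 2 := by
      intro y hy
      have hyI := Ioo_subset_Icc_self hy
      have hsym' : ∀ x ∈ Icc (0:ℝ) 1, Vxy (x, y) = Vyx (x, y) :=
        fun x hx => hsymm (x, y) (sqU x hx y hyI)
      have hg : ∀ x ∈ Icc (0:ℝ) 1, HasDerivAt (fun x => Vy (x, y)) (Vyx (x, y)) x :=
        fun x hx => hdVyx (x, y) (sqU x hx y hyI)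
      have hibp0 := ibp (fun x => Vy (x, y)) (fun x => Vyx (x, y)) hg (sliceX Vyx cVyx y hyI)
      have hibp : (∫ x in (0:ℝ)..1, (x - 1/2) * (2 * (Vy (x, y) * Vyx (x, y))))
          = 1/2 * Vy (1, y) ^ 2 + 1/2 * Vy (0, y) ^ 2 - ∫ x in (0:ℝ)..1, Vy (x, y) ^ 2 := hibp0
      rw [hVyR y hy, hVyL y hy] at hibp
      have hhalf : (∫ x in (0:ℝ)..1, (x - 1/2) * (Vxy (x, y) * Vy (x, y)))
          = 1/2 * ∫ x in (0:ℝ)..1, (x - 1/2) * (2 * (Vy (x, y) * Vyx (x, y))) := by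
        rw [← intervalIntegral.integral_const_mul]
        apply intervalIntegral.integral_congr
        intro x hx
        show (x - 1/2) * (Vxy (x, y) * Vy (x, y))
          = 1/2 * ((x - 1/2) * (2 * (Vy (x, y) * Vyx (x, y))))
        rw [hsym' x (by rwa [Set.uIcc_of_le h01] at hx)]
        ring
      rw [hhalf, hibp]
      ring
    have hB : (∫ y in (0:ℝ)..1, ∫ x in (0:ℝ)..1, (x - 1/2) * (Vxy (x, y) * Vy (x, y)))
        = -(1/2) * ∫ y in (0:ℝ)..1, ∫ x in (0:ℝ)..1, Vy (x, y) ^ 2 :=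
      (integral_congr_Ioo (fun y hy => innerB y hy)).trans
        (intervalIntegral.integral_const_mul _ _)
    have hQconv : (∫ p, Vy p ^ 2 ∂pm)
        = ∫ y in (0:ℝ)..1, ∫ x in (0:ℝ)..1, Vy (x, y) ^ 2 := conv2 (f := fun p => Vy p ^ 2) iVy2
    rw [hJ2conv, hA, hpush, ← hKconv1, hKconv2, hB, ← hQconv]
    ring
  -- translate goal to Vx/Vy language
  have hgoal0 : (∫ y in (0:ℝ)..1, (deriv (fun s : ℝ => v s y) 0) ^ 2)
      = ∫ y in (0:ℝ)..1, Vx (0, y) ^ 2 := by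
    apply intervalIntegral.integral_congr
    intro y hy
    rw [Set.uIcc_of_le h01] at hy
    exact congrArg (fun z => z ^ 2) (hdVx ((0:ℝ), y) (sqU 0 (by norm_num) y hy)).deriv
  have hgoal1 : (∫ y in (0:ℝ)..1, (deriv (fun s : ℝ => v s y) 1) ^ 2)
      = ∫ y in (0:ℝ)..1, Vx (1, y) ^ 2 := by
    apply intervalIntegral.integral_congr
    intro y hy
    rw [Set.uIcc_of_le h01] at hy
    exact congrArg (fun z => z ^ 2) (hdVx ((1:ℝ), y) (sqU 1 (by norm_num) y hy)).deriv
  have hP : (∫ x in (0:ℝ)..1, ∫ y in (0:ℝ)..1, (deriv (fun s : ℝ => v s y) x) ^ 2)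
      = ∫ p, Vx p ^ 2 ∂pm := by
    have h : ∀ x ∈ Icc (0:ℝ) 1, ∀ y ∈ Icc (0:ℝ) 1,
        (deriv (fun s : ℝ => v s y) x) ^ 2 = Vx (x, y) ^ 2 :=
      fun x hx y hy => congrArg (fun z => z ^ 2) (hdVx (x, y) (sqU x hx y hy)).deriv
    exact (dcongr h).trans (conv1 (f := fun p => Vx p ^ 2) iVx2).symm
  have hQ : (∫ x in (0:ℝ)..1, ∫ y in (0:ℝ)..1, (deriv (fun t : ℝ => v x t) y) ^ 2)
      = ∫ p, Vy p ^ 2 ∂pm := by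
    have h : ∀ x ∈ Icc (0:ℝ) 1, ∀ y ∈ Icc (0:ℝ) 1,
        (deriv (fun t : ℝ => v x t) y) ^ 2 = Vy (x, y) ^ 2 :=
      fun x hx y hy => congrArg (fun z => z ^ 2) (hdVy (x, y) (sqU x hx y hy)).deriv
    exact (dcongr h).trans (conv1 (f := fun p => Vy p ^ 2) iVy2).symm
  have hN : (∫ x in (0:ℝ)..1, ∫ y in (0:ℝ)..1, (v x y) ^ 2) = ∫ p, F p ^ 2 ∂pm :=
    (conv1 (f := fun p => F p ^ 2) iF2).symm
  rw [hgoal0, hgoal1, hP, hQ, hN]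
  linear_combination 4 * hsum - 4 * hJ1 - 4 * hJ2 - 4 * hJ3

end RellichAux

open MeasureTheory intervalIntegral

/-- Rellich identity for an `L²`-normalized Dirichlet Laplace eigenfunction on
the unit square, with base point at the center: `μ` equals one quarter of the sum of the
integrals of the squared normal derivatives over the four sides. -/
theorem rellich_identity_dirichlet_square
    (v : ℝ → ℝ → ℝ) (μ : ℝ) (U : Set (ℝ × ℝ)) (hU : IsOpen U)
    (hQU : Set.Icc ((0 : ℝ), (0 : ℝ)) (1, 1) ⊆ U)
    (hv : ContDiffOn ℝ 2 (fun p : ℝ × ℝ => v p.1 p.2) U)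
    (heq : ∀ x ∈ Set.Icc (0 : ℝ) 1, ∀ y ∈ Set.Icc (0 : ℝ) 1,
      deriv (deriv (fun s : ℝ => v s y)) x + deriv (deriv (fun t : ℝ => v x t)) y
        + μ * v x y = 0)
    (hdirL : ∀ y ∈ Set.Icc (0 : ℝ) 1, v 0 y = 0)
    (hdirR : ∀ y ∈ Set.Icc (0 : ℝ) 1, v 1 y = 0)
    (hdirB : ∀ x ∈ Set.Icc (0 : ℝ) 1, v x 0 = 0)
    (hdirT : ∀ x ∈ Set.Icc (0 : ℝ) 1, v x 1 = 0)
    (hnorm : (∫ x in (0 : ℝ)..1, ∫ y in (0 : ℝ)..1, (v x y) ^ 2) = 1) :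
    μ = (1 / 4) * ((∫ y in (0 : ℝ)..1, (deriv (fun s : ℝ => v s y) 0) ^ 2)
        + (∫ y in (0 : ℝ)..1, (deriv (fun s : ℝ => v s y) 1) ^ 2)
        + (∫ x in (0 : ℝ)..1, (deriv (fun t : ℝ => v x t) 0) ^ 2)
        + (∫ x in (0 : ℝ)..1, (deriv (fun t : ℝ => v x t) 1) ^ 2)) := by
  have h01 : (0:ℝ) ≤ 1 := by norm_num
  have E1 := RellichAux.aux v μ U hU hQU hv heq hdirL hdirR hdirB hdirT
  rw [hnorm] at E1
  -- the transposed function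
  have hU' : IsOpen (Prod.swap ⁻¹' U) := hU.preimage continuous_swap
  have hQU' : Set.Icc ((0:ℝ), (0:ℝ)) (1, 1) ⊆ Prod.swap ⁻¹' U := RellichAux.sq_swap_subset hQU
  have hv' : ContDiffOn ℝ 2 (fun p : ℝ × ℝ => v p.2 p.1) (Prod.swap ⁻¹' U) :=
    hv.comp ((contDiff_snd.prodMk contDiff_fst).contDiffOn) (fun p hp => hp)
  have heq' : ∀ x ∈ Set.Icc (0:ℝ) 1, ∀ y ∈ Set.Icc (0:ℝ) 1,
      deriv (deriv (fun s : ℝ => v y s)) x + deriv (deriv (fun t : ℝ => v t x)) y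
        + μ * v y x = 0 := by
    intro x hx y hy
    have h := heq y hy x hx
    linarith
  have E2 := RellichAux.aux (fun a b => v b a) μ (Prod.swap ⁻¹' U) hU' hQU' hv' heq'
    (fun y hy => hdirB y hy) (fun y hy => hdirT y hy)
    (fun x hx => hdirL x hx) (fun x hx => hdirR x hx)
  -- partial derivative setup for the swap identifications
  set F : ℝ × ℝ → ℝ := fun p => v p.1 p.2 with hF
  set Vx : ℝ × ℝ → ℝ := fun p => fderiv ℝ F p ((1:ℝ), (0:ℝ)) with hVxdef
  set Vy : ℝ × ℝ → ℝ := fun p => fderiv ℝ F p ((0:ℝ), (1:ℝ)) with hVydef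
  have hv1 : ContDiffOn ℝ 1 F U := hv.of_le one_le_two
  have sqU : ∀ x ∈ Set.Icc (0:ℝ) 1, ∀ y ∈ Set.Icc (0:ℝ) 1, (x, y) ∈ U := by
    intro x hx y hy
    apply hQU
    rw [Set.Icc_prod_eq]
    exact Set.mem_prod.mpr ⟨hx, hy⟩
  have hdVx : ∀ p ∈ U, HasDerivAt (fun s => v s p.2) (Vx p) p.1 :=
    fun p hp => RellichAux.hasPartial1 hU hv1 hp
  have hdVy : ∀ p ∈ U, HasDerivAt (fun t => v p.1 t) (Vy p) p.2 :=
    fun p hp => RellichAux.hasPartial2 hU hv1 hp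
  have cVx : ContinuousOn Vx U := RellichAux.contPartial hU hv1 _
  have cVy : ContinuousOn Vy U := RellichAux.contPartial hU hv1 _
  -- swap identifications
  have hPw : (∫ x in (0:ℝ)..1, ∫ y in (0:ℝ)..1, (deriv (fun s : ℝ => v y s) x) ^ 2)
      = ∫ x in (0:ℝ)..1, ∫ y in (0:ℝ)..1, (deriv (fun t : ℝ => v x t) y) ^ 2 := by
    have h1 : (∫ x in (0:ℝ)..1, ∫ y in (0:ℝ)..1, (deriv (fun s : ℝ => v y s) x) ^ 2)
        = ∫ x in (0:ℝ)..1, ∫ y in (0:ℝ)..1, Vy (y, x) ^ 2 :=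
      RellichAux.dcongr (fun x hx y hy =>
        congrArg (fun z => z ^ 2) (hdVy (y, x) (sqU y hy x hx)).deriv)
    have h2 : (∫ x in (0:ℝ)..1, ∫ y in (0:ℝ)..1, Vy (y, x) ^ 2)
        = ∫ x in (0:ℝ)..1, ∫ y in (0:ℝ)..1, Vy (x, y) ^ 2 :=
      RellichAux.swap_double (g := fun p => Vy p ^ 2) hU hQU (cVy.pow 2)
    have h3 : (∫ x in (0:ℝ)..1, ∫ y in (0:ℝ)..1, (deriv (fun t : ℝ => v x t) y) ^ 2)
        = ∫ x in (0:ℝ)..1, ∫ y in (0:ℝ)..1, Vy (x, y) ^ 2 :=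
      RellichAux.dcongr (fun x hx y hy =>
        congrArg (fun z => z ^ 2) (hdVy (x, y) (sqU x hx y hy)).deriv)
    rw [h1, h2, ← h3]
  have hQw : (∫ x in (0:ℝ)..1, ∫ y in (0:ℝ)..1, (deriv (fun t : ℝ => v t x) y) ^ 2)
      = ∫ x in (0:ℝ)..1, ∫ y in (0:ℝ)..1, (deriv (fun s : ℝ => v s y) x) ^ 2 := by
    have h1 : (∫ x in (0:ℝ)..1, ∫ y in (0:ℝ)..1, (deriv (fun t : ℝ => v t x) y) ^ 2)
        = ∫ x in (0:ℝ)..1, ∫ y in (0:ℝ)..1, Vx (y, x) ^ 2 :=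
      RellichAux.dcongr (fun x hx y hy =>
        congrArg (fun z => z ^ 2) (hdVx (y, x) (sqU y hy x hx)).deriv)
    have h2 : (∫ x in (0:ℝ)..1, ∫ y in (0:ℝ)..1, Vx (y, x) ^ 2)
        = ∫ x in (0:ℝ)..1, ∫ y in (0:ℝ)..1, Vx (x, y) ^ 2 :=
      RellichAux.swap_double (g := fun p => Vx p ^ 2) hU hQU (cVx.pow 2)
    have h3 : (∫ x in (0:ℝ)..1, ∫ y in (0:ℝ)..1, (deriv (fun s : ℝ => v s y) x) ^ 2)
        = ∫ x in (0:ℝ)..1, ∫ y in (0:ℝ)..1, Vx (x, y) ^ 2 :=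
      RellichAux.dcongr (fun x hx y hy =>
        congrArg (fun z => z ^ 2) (hdVx (x, y) (sqU x hx y hy)).deriv)
    rw [h1, h2, ← h3]
  have hNw : (∫ x in (0:ℝ)..1, ∫ y in (0:ℝ)..1, (v y x) ^ 2) = 1 := by
    have h2 : (∫ x in (0:ℝ)..1, ∫ y in (0:ℝ)..1, (v y x) ^ 2)
        = ∫ x in (0:ℝ)..1, ∫ y in (0:ℝ)..1, (v x y) ^ 2 :=
      RellichAux.swap_double (g := fun p => v p.1 p.2 ^ 2) hU hQU (hv.continuousOn.pow 2)
    rw [h2, hnorm]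
  rw [hPw, hQw, hNw] at E2
  linarith [E1, E2]
end
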